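/- arXiv:2211.02550 — 5 statements merged into one kernel-verified Lean document; each statement's English description precedes it below -/
import Mathlib

section
/- (Navarrete's theorem) For every positive integer s and every integer n ≥ s, the number a_{1,s}(n) of permutations π of {1,…,n} such that π_{i+1} − π_i ≠ s for all 1 ≤ i ≤ n−1 equals Σ_{j=0}^{n−s} (−1)^j · C(n−s, j) · (n−j)!. -/
/-- The set of permutations `π` of `{0,…,n-1}` (equivalently `{1,…,n}`) such that
`π (i+1) - π i ≠ s` for all valid indices `i`. -/
def noRise (s n : ℕ) : Finset (Equiv.Perm (Fin n)) :=
  Finset.univ.filter fun π =>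
    ∀ i j : Fin n, (j : ℕ) = (i : ℕ) + 1 →
      ((π j : ℕ) : ℤ) - ((π i : ℕ) : ℤ) ≠ (s : ℤ)

/-!
Write `σ = π⁻¹`, the map sending each value to its position. Then `π` has a rise `π (i+1) - π i = s`
at the value `a = π i` exactly when `σ` places `a + s` immediately after `a`. By inclusion–exclusion
over the sets `T ⊆ {0, …, n-s-1}` of such forced gluings, it suffices to show that exactly
`(n - #T)!` permutations glue every `a ∈ T`. Since `s ≥ 1`, the largest `a ∈ T` has `a + s ∉ T`
and nothing is glued after `a + s`; deleting the value `a + s` (whose position is then forced)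
is a bijection onto the permutations of `n - 1` points gluing `T \ {a}`.
-/

open Finset Equiv

namespace Fin

variable {m : ℕ}

lemma val_succAbove (q : Fin (m + 1)) (x : Fin m) :
    (q.succAbove x : ℕ) = if (x : ℕ) < q then (x : ℕ) else (x : ℕ) + 1 := by
  rcases lt_or_ge x.castSucc q with h | h
  · simp [succAbove_of_castSucc_lt _ _ h, show (x : ℕ) < q from h]
  · rw [succAbove_of_le_castSucc _ _ h, if_neg (not_lt.mpr (show (q : ℕ) ≤ x from h)),
      val_succ]

lemma eq_succ_of_val_eq_succAbove_add_one {q : Fin (m + 1)} {x : Fin m}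
    (h : (q : ℕ) = q.succAbove x + 1) : q = x.succ := by
  rw [val_succAbove] at h
  ext
  rw [val_succ]
  split_ifs at h <;> omega

lemma val_succAbove_eq_val_succAbove_add_one_iff (q : Fin (m + 1)) {x : Fin m} (y : Fin m)
    (hx : (x : ℕ) + 1 ≠ q) :
    (q.succAbove y : ℕ) = q.succAbove x + 1 ↔ (y : ℕ) = x + 1 := by
  rw [val_succAbove, val_succAbove]
  split_ifs <;> omega

end Fin

namespace Equiv.Perm

variable {m : ℕ}

/-- Delete the point `v` and its image `σ v`, renumbering both sides order-preservingly. -/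
def eraseFin (v : Fin (m + 1)) (σ : Perm (Fin (m + 1))) : Perm (Fin m) :=
  removeNone ((finSuccEquiv' v).symm.trans (σ.trans (finSuccEquiv' (σ v))))

def insertFin (v q : Fin (m + 1)) (ρ : Perm (Fin m)) : Perm (Fin (m + 1)) :=
  (finSuccEquiv' v).trans (ρ.optionCongr.trans (finSuccEquiv' q).symm)

lemma apply_succAbove_eq_succAbove_eraseFin (v : Fin (m + 1)) (σ : Perm (Fin (m + 1)))
    (x : Fin m) : σ (v.succAbove x) = (σ v).succAbove (eraseFin v σ x) := by
  rw [eraseFin]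
  set e := (finSuccEquiv' v).symm.trans (σ.trans (finSuccEquiv' (σ v)))
  have he : e (some x) = finSuccEquiv' (σ v) (σ (v.succAbove x)) := by simp [e]
  have hsome : ∃ y, e (some x) = some y := by
    rw [← Option.ne_none_iff_exists', he, Ne, finSuccEquiv'_eq_none, eq_comm, σ.apply_eq_iff_eq]
    exact Fin.succAbove_ne v x
  rw [← finSuccEquiv'_symm_some (σ v), removeNone_some e hsome, he, symm_apply_apply]

@[simp]
lemma insertFin_apply_self (v q : Fin (m + 1)) (ρ : Perm (Fin m)) : insertFin v q ρ v = q := by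
  simp [insertFin, finSuccEquiv'_at]

@[simp]
lemma insertFin_apply_succAbove (v q : Fin (m + 1)) (ρ : Perm (Fin m)) (x : Fin m) :
    insertFin v q ρ (v.succAbove x) = q.succAbove (ρ x) := by
  simp [insertFin, finSuccEquiv'_succAbove]

lemma eraseFin_insertFin (v q : Fin (m + 1)) (ρ : Perm (Fin m)) :
    eraseFin v (insertFin v q ρ) = ρ := by
  ext1 x
  have h := apply_succAbove_eq_succAbove_eraseFin v (insertFin v q ρ) x
  rw [insertFin_apply_succAbove, insertFin_apply_self, Fin.succAbove_right_inj] at h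
  exact h.symm

lemma insertFin_eraseFin (v : Fin (m + 1)) (σ : Perm (Fin (m + 1))) :
    insertFin v (σ v) (eraseFin v σ) = σ := by
  ext1 y
  induction y using Fin.succAboveCases v with
  | x => simp
  | p x => simp [apply_succAbove_eq_succAbove_eraseFin v σ x]

/-- Once `σ` is known away from `v`, gluing `v` right after `v.succAbove u` forces `σ v`. -/
lemma card_filter_apply_eq_succ_and_eraseFin (v : Fin (m + 1)) (u : Fin m)
    (P : Perm (Fin m) → Prop) [DecidablePred P] :
    #{σ : Perm (Fin (m + 1)) | (σ v : ℕ) = σ (v.succAbove u) + 1 ∧ P (eraseFin v σ)} =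
      #{ρ : Perm (Fin m) | P ρ} := by
  apply card_nbij' (eraseFin v) (fun ρ => insertFin v (ρ u).succ ρ)
  · intro σ hσ
    simp_all
  · intro ρ hρ
    simp only [coe_filter, mem_univ, true_and, Set.mem_ofPred_eq] at hρ ⊢
    rw [insertFin_apply_self, insertFin_apply_succAbove, Fin.succAbove_succ_self,
      eraseFin_insertFin]
    exact ⟨by simp, hρ⟩
  · intro σ hσ
    simp only [coe_filter, mem_univ, true_and, Set.mem_ofPred_eq] at hσ
    have hv : σ v = (eraseFin v σ u).succ := Fin.eq_succ_of_val_eq_succAbove_add_one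
      (by rw [← apply_succAbove_eq_succAbove_eraseFin]; exact hσ.1)
    simp only [← hv, insertFin_eraseFin]
  · intro ρ _
    exact eraseFin_insertFin v _ ρ

end Equiv.Perm

namespace Navarrete

open Equiv.Perm Nat

variable {s n : ℕ}

/-- Reading `σ` as the map from values to positions: `σ` places the value `a + s` right after
the value `a`. -/
def GluedAt (s a : ℕ) (σ : Perm (Fin n)) : Prop :=
  ∀ i j : Fin n, (i : ℕ) = a → (j : ℕ) = a + s → (σ j : ℕ) = σ i + 1

instance (s a : ℕ) : DecidablePred (GluedAt (n := n) s a) := fun σ => by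
  unfold GluedAt
  infer_instance

lemma gluedAt_iff {a : ℕ} (h : a + s < n) (σ : Perm (Fin n)) :
    GluedAt s a σ ↔ (σ ⟨a + s, h⟩ : ℕ) = σ ⟨a, by omega⟩ + 1 :=
  ⟨fun hσ => hσ _ _ rfl rfl, by rintro hσ ⟨i, hi⟩ ⟨j, hj⟩ rfl rfl; exact hσ⟩

lemma mem_noRise_iff (π : Perm (Fin n)) :
    π ∈ noRise s n ↔ ∀ a ∈ range (n - s), ¬ GluedAt s a π⁻¹ := by
  simp only [noRise, mem_filter, mem_univ, true_and, mem_range]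
  constructor
  · intro hπ a ha hglued
    apply hπ _ _ ((gluedAt_iff (by omega) _).1 hglued)
    simp
  · intro h i j hij hrise
    have hlt : (π i : ℕ) + s < n := by omega
    refine h (π i) (by omega) ((gluedAt_iff hlt _).2 ?_)
    have hj : (⟨π i + s, hlt⟩ : Fin n) = π j := Fin.ext (by simp only; omega)
    simp [hj, hij]

lemma gluedAt_eraseFin_iff {m : ℕ} {v : Fin (m + 1)} {u : Fin m} {σ : Perm (Fin (m + 1))}
    (hσ : (σ v : ℕ) = σ (v.succAbove u) + 1) {b : ℕ} (hb : b + s < v) (hbu : b ≠ u) :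
    GluedAt s b (eraseFin v σ) ↔ GluedAt s b σ := by
  have hbm : b + s < m := by omega
  have hbelow : ∀ c (hc : c < m), c < v → (⟨c, by omega⟩ : Fin (m + 1)) = v.succAbove ⟨c, hc⟩ :=
    fun c hc hcv => by rw [Fin.succAbove_of_castSucc_lt _ _ hcv]; rfl
  have hv : σ v = (eraseFin v σ u).succ := Fin.eq_succ_of_val_eq_succAbove_add_one
    (by rw [← apply_succAbove_eq_succAbove_eraseFin]; exact hσ)
  rw [gluedAt_iff hbm, gluedAt_iff (by omega), hbelow (b + s) hbm hb,
    hbelow b (by omega) (by omega), apply_succAbove_eq_succAbove_eraseFin,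
    apply_succAbove_eq_succAbove_eraseFin,
    Fin.val_succAbove_eq_val_succAbove_add_one_iff]
  -- the gap at `σ v` lies right after the image of `u`, which `b ≠ u` avoids
  rw [hv, Fin.val_succ, Ne, add_left_inj, ← Fin.ext_iff, (eraseFin v σ).injective.eq_iff]
  exact fun h => hbu (congrArg Fin.val h)

theorem card_filter_forall_gluedAt (hs : 1 ≤ s) (T : Finset ℕ) (hT : ∀ a ∈ T, a + s < n) :
    #{σ : Perm (Fin n) | ∀ a ∈ T, GluedAt s a σ} = (n - #T)! := by
  induction T using Finset.induction_on_max generalizing n with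
  | empty => simp [Fintype.card_perm]
  | insert a T hlt ih =>
    have ha := hT a (mem_insert_self a T)
    obtain ⟨m, rfl⟩ : ∃ m, n = m + 1 := ⟨n - 1, by omega⟩
    set v : Fin (m + 1) := ⟨a + s, ha⟩
    set u : Fin m := ⟨a, by omega⟩
    have hu : v.succAbove u = ⟨a, by omega⟩ :=
      Fin.succAbove_of_castSucc_lt _ _ (by simp only [v, u, Fin.lt_def, Fin.val_castSucc]; omega)
    calc #{σ : Perm (Fin (m + 1)) | ∀ b ∈ insert a T, GluedAt s b σ}
        = #{σ : Perm (Fin (m + 1)) |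
            (σ v : ℕ) = σ (v.succAbove u) + 1 ∧ ∀ b ∈ T, GluedAt s b (eraseFin v σ)} := by
          congr 1
          refine filter_congr fun σ _ => ?_
          rw [forall_mem_insert, gluedAt_iff ha, ← hu]
          refine and_congr_right fun hσ => forall₂_congr fun b hb => ?_
          have := hlt b hb
          exact (gluedAt_eraseFin_iff hσ (by simp only; omega) (show b ≠ u from this.ne)).symm
      _ = #{ρ : Perm (Fin m) | ∀ b ∈ T, GluedAt s b ρ} :=
          card_filter_apply_eq_succ_and_eraseFin v u fun ρ => ∀ b ∈ T, GluedAt s b ρ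
      _ = (m + 1 - #(insert a T))! := by
          rw [ih fun b hb => by have := hlt b hb; omega,
            card_insert_of_notMem fun h => (hlt a h).false]
          congr 1
          omega

end Navarrete

open Navarrete

theorem navarrete_general (s n : ℕ) (hs : 1 ≤ s) :
    ((noRise s n).card : ℤ) =
      ∑ j ∈ Finset.range (n - s + 1),
        (-1 : ℤ) ^ j * (n - s).choose j * (n - j).factorial := by
  set S : ℕ → Finset (Perm (Fin n)) := fun a => {σ | GluedAt s a σ}
  have hinf (t : Finset ℕ) :
      t.inf S = ({σ | ∀ a ∈ t, GluedAt s a σ} : Finset (Perm (Fin n))) := by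
    ext σ
    simp [mem_inf, S]
  calc ((noRise s n).card : ℤ)
      = #((range (n - s)).inf fun a => (S a)ᶜ) := by
        congr 1
        refine card_equiv (Equiv.inv _) fun π => ?_
        simp [mem_noRise_iff, mem_inf, S]
    _ = ∑ t ∈ (range (n - s)).powerset, (-1 : ℤ) ^ #t * #(t.inf S) :=
        inclusion_exclusion_card_inf_compl _ _
    _ = ∑ t ∈ (range (n - s)).powerset, (-1 : ℤ) ^ #t * ((n - #t).factorial : ℕ) := by
        refine sum_congr rfl fun t ht => ?_
        rw [hinf, card_filter_forall_gluedAt hs]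
        intro a ha
        have := mem_range.1 (mem_powerset.1 ht ha)
        omega
    _ = _ := by
        refine (sum_powerset_apply_card fun k => (-1 : ℤ) ^ k * ((n - k).factorial : ℕ)).trans ?_
        simp only [card_range, nsmul_eq_mul]
        exact sum_congr rfl fun j _ => by ring

/-- Navarrete's theorem: for `s ≥ 1` and `n ≥ s`,
`a_{1,s}(n) = Σ_{j=0}^{n-s} (-1)^j C(n-s,j) (n-j)!`. -/
theorem navarrete (s n : ℕ) (hs : 1 ≤ s) (hn : s ≤ n) :
    ((noRise s n).card : ℤ) =
      ∑ j ∈ Finset.range (n - s + 1),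
        (-1 : ℤ) ^ j * (n - s).choose j * (n - j).factorial :=
  navarrete_general s n hs
end

section
/- For every positive integer s and every integer n ≥ s+1, the sequence a_{1,s} satisfies the second-order recurrence a_{1,s}(n) = (n−1)·a_{1,s}(n−1) + (n−s−1)·a_{1,s}(n−2), where the equation is read in the integers (the coefficient n−s−1 may be zero). -/
open Finset Nat

def avoidCount : ℕ → ℕ → ℤ
  | m, 0 => (m ! : ℤ)
  | m, k + 1 => avoidCount (m + 1) k - avoidCount m k

lemma avoidCount_one (m : ℕ) : avoidCount m 1 = m * avoidCount m 0 := by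
  simp only [avoidCount, factorial_succ]
  push_cast
  ring

lemma avoidCount_add_two (m k : ℕ) :
    avoidCount m (k + 2) = (m + k + 1) * avoidCount m (k + 1) + (k + 1) * avoidCount m k := by
  induction k generalizing m with
  | zero =>
    simp only [avoidCount, factorial_succ]
    push_cast
    ring
  | succ k ih =>
    have h₁ := ih (m + 1)
    have h₀ := ih m
    simp only [avoidCount] at h₁ h₀ ⊢
    push_cast at h₁ h₀ ⊢
    linear_combination h₁ - h₀

namespace List

variable {α : Type*} {R : α → α → Prop} {p q : α} {u v : List α}

lemma isChain_cons_iff_of_forall (h : ∀ b, R p b) : IsChain R (p :: v) ↔ IsChain R v := by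
  simp [isChain_cons, h]

lemma isChain_append_cons_cons_iff_of_forall (hp : ∀ b, R p b) (hq : ∀ b, R q b) :
    IsChain R (u ++ p :: q :: v) ↔ IsChain R (u ++ p :: v) := by
  rw [isChain_split, isChain_split (l₂ := v), isChain_cons_iff_of_forall hp,
    isChain_cons_iff_of_forall hp, isChain_cons_iff_of_forall hq]

lemma exists_eq_append_cons_cons_of_infix {l : List α} (h : [p, q] <:+: l) :
    ∃ u v, l = u ++ p :: q :: v := by
  obtain ⟨u, v, rfl⟩ := h
  exact ⟨u, v, by simp⟩

variable [DecidableEq α]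

def insertAfter (p q : α) : List α → List α
  | [] => []
  | a :: l => if a = p then a :: q :: l else a :: insertAfter p q l

lemma insertAfter_append_cons (hp : p ∉ u) :
    insertAfter p q (u ++ p :: v) = u ++ p :: q :: v := by
  induction u with
  | nil => simp [insertAfter]
  | cons a u ih =>
    rw [mem_cons, not_or] at hp
    simp [insertAfter, Ne.symm hp.1, ih hp.2]

lemma erase_append_cons_cons (hq : q ∉ u) (hpq : p ≠ q) :
    (u ++ p :: q :: v).erase q = u ++ p :: v := by
  rw [erase_append_right _ hq, erase_cons_tail (by simpa using hpq), erase_cons_head]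

end List

section Arrangements

variable {α : Type*}

def Finset.arrangements (A : Finset α) : Finset (List α) :=
  ⟨A.val.lists, Multiset.lists_nodup_finset A⟩

namespace Finset

variable {A : Finset α} {l : List α}

lemma mem_arrangements : l ∈ A.arrangements ↔ A.val = l :=
  Multiset.mem_lists_iff _ _

lemma mem_arrangements_iff_nodup :
    l ∈ A.arrangements ↔ l.Nodup ∧ ∀ x, x ∈ l ↔ x ∈ A := by
  rw [mem_arrangements]
  refine ⟨fun h => ⟨Multiset.coe_nodup.1 (h ▸ A.nodup), fun x => ?_⟩, fun ⟨hl, hmem⟩ => ?_⟩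
  · simp [← Multiset.mem_coe, ← h]
  · rw [Multiset.Nodup.ext A.nodup (Multiset.coe_nodup.2 hl)]
    simp [hmem]

lemma card_arrangements (A : Finset α) : #A.arrangements = (#A)! := by
  change Multiset.card A.val.lists = _
  rw [← A.coe_toList, Multiset.lists_coe, Multiset.coe_card, List.length_permutations,
    length_toList]

lemma erase_mem_arrangements_erase_iff [DecidableEq α] {q : α} (hqA : q ∈ A) (hql : q ∈ l) :
    l.erase q ∈ (A.erase q).arrangements ↔ l ∈ A.arrangements := by
  rw [mem_arrangements, mem_arrangements, erase_val, ← Multiset.coe_erase]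
  constructor
  · intro h
    rw [← Multiset.cons_erase (Multiset.mem_coe.2 hql), ← h, Multiset.cons_erase hqA]
  · intro h
    rw [h]

end Finset

section Avoids

variable [DecidableEq α]

def Avoids (E : Finset (α × α)) (l : List α) : Prop :=
  l.IsChain fun a b => (a, b) ∉ E

instance (E : Finset (α × α)) : DecidablePred (Avoids E) :=
  fun l => inferInstanceAs (Decidable (l.IsChain _))

variable {A : Finset α} {E : Finset (α × α)} {p q : α} {l : List α}

lemma avoids_insert_iff : Avoids (insert (p, q) E) l ↔ Avoids E l ∧ ¬[p, q] <:+: l := by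
  simp only [Avoids, List.isChain_iff_forall_rel_of_append_cons_cons, mem_insert, Prod.mk.injEq,
    not_or]
  constructor
  · intro h
    refine ⟨fun a b u v hl => (h hl).2, ?_⟩
    rintro ⟨u, v, rfl⟩
    exact (h (l₁ := u) (l₂ := v) (by simp)).1 ⟨rfl, rfl⟩
  · rintro ⟨h, hpq⟩ a b u v rfl
    refine ⟨?_, h rfl⟩
    rintro ⟨rfl, rfl⟩
    exact hpq ⟨u, v, by simp⟩

lemma card_filter_avoids_infix_eq (hpA : p ∈ A) (hqA : q ∈ A) (hpq : p ≠ q)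
    (hpE : ∀ c, (p, c) ∉ E) (hqE : ∀ c, (q, c) ∉ E) :
    #{l ∈ A.arrangements | Avoids E l ∧ [p, q] <:+: l} =
      #{m ∈ (A.erase q).arrangements | Avoids E m} := by
  have avoids_iff (u v : List α) : Avoids E (u ++ p :: q :: v) ↔ Avoids E (u ++ p :: v) :=
    List.isChain_append_cons_cons_iff_of_forall hpE hqE
  have split_source {l : List α} (hl : l ∈ A.arrangements) (hpql : [p, q] <:+: l) :
      ∃ u v, l = u ++ p :: q :: v ∧ p ∉ u ∧ q ∉ u := by
    obtain ⟨u, v, rfl⟩ := List.exists_eq_append_cons_cons_of_infix hpql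
    have hdisj := (List.nodup_append.1 (mem_arrangements_iff_nodup.1 hl).1).2.2
    exact ⟨u, v, rfl, fun h => hdisj p h p (by simp) rfl, fun h => hdisj q h q (by simp) rfl⟩
  have split_target {m : List α} (hm : m ∈ (A.erase q).arrangements) :
      ∃ u v, m = u ++ p :: v ∧ p ∉ u ∧ q ∉ u := by
    obtain ⟨hnd, hmem⟩ := mem_arrangements_iff_nodup.1 hm
    obtain ⟨u, v, rfl⟩ := List.append_of_mem ((hmem p).2 (mem_erase.2 ⟨hpq, hpA⟩))
    have hqm : q ∉ u ++ p :: v := fun h => by simpa using (hmem q).1 h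
    exact ⟨u, v, rfl, fun h => (List.nodup_append.1 hnd).2.2 p h p (by simp) rfl,
      fun h => hqm (by simp [h])⟩
  apply card_nbij' (·.erase q) (List.insertAfter p q)
  · intro l hl
    simp only [mem_coe, mem_filter] at hl ⊢
    obtain ⟨hlA, hlE, hpql⟩ := hl
    obtain ⟨u, v, rfl, -, hqu⟩ := split_source hlA hpql
    refine ⟨(erase_mem_arrangements_erase_iff hqA (by simp)).2 hlA, ?_⟩
    rw [List.erase_append_cons_cons hqu hpq]
    exact (avoids_iff u v).1 hlE
  · intro m hm
    simp only [mem_coe, mem_filter] at hm ⊢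
    obtain ⟨hmA, hmE⟩ := hm
    obtain ⟨u, v, rfl, hpu, hqu⟩ := split_target hmA
    rw [List.insertAfter_append_cons hpu]
    refine ⟨?_, (avoids_iff u v).2 hmE, ⟨u, v, by simp⟩⟩
    rw [← erase_mem_arrangements_erase_iff hqA (by simp), List.erase_append_cons_cons hqu hpq]
    exact hmA
  · intro l hl
    simp only [mem_coe, mem_filter] at hl
    obtain ⟨u, v, rfl, hpu, hqu⟩ := split_source hl.1 hl.2.2
    dsimp only
    rw [List.erase_append_cons_cons hqu hpq, List.insertAfter_append_cons hpu]
  · intro m hm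
    simp only [mem_coe, mem_filter] at hm
    obtain ⟨u, v, rfl, hpu, hqu⟩ := split_target hm.1
    dsimp only
    rw [List.insertAfter_append_cons hpu, List.erase_append_cons_cons hqu hpq]

end Avoids

section Forest

variable [LinearOrder α]

structure IsIncreasingLinearForest (A : Finset α) (E : Finset (α × α)) : Prop where
  subset : E ⊆ A ×ˢ A
  lt : ∀ e ∈ E, e.1 < e.2
  injOn_fst : Set.InjOn Prod.fst (E : Set (α × α))
  injOn_snd : Set.InjOn Prod.snd (E : Set (α × α))

namespace IsIncreasingLinearForest

variable {A : Finset α} {E : Finset (α × α)} {p q : α}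

lemma exists_sink (hE : IsIncreasingLinearForest A E) (hne : E.Nonempty) :
    ∃ p q, (p, q) ∈ E ∧ ∀ c, (q, c) ∉ E := by
  obtain ⟨⟨p, q⟩, hpq, hmax⟩ := E.exists_max_image Prod.snd hne
  exact ⟨p, q, hpq, fun c hc => (hE.lt _ hc).not_ge (hmax _ hc)⟩

lemma mono {E' : Finset (α × α)} (hE : IsIncreasingLinearForest A E) (h : E' ⊆ E) :
    IsIncreasingLinearForest A E' where
  subset := h.trans hE.subset
  lt e he := hE.lt e (h he)
  injOn_fst := hE.injOn_fst.mono h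
  injOn_snd := hE.injOn_snd.mono h

lemma erase_sink (hE : IsIncreasingLinearForest A E) (hpq : (p, q) ∈ E)
    (hq : ∀ c, (q, c) ∉ E) : IsIncreasingLinearForest (A.erase q) (E.erase (p, q)) where
  __ := hE.mono (erase_subset _ _)
  subset := by
    rintro ⟨b, c⟩ hbc
    obtain ⟨hne, hbcE⟩ := mem_erase.1 hbc
    obtain ⟨hb, hc⟩ := mem_product.1 (hE.subset hbcE)
    refine mem_product.2 ⟨mem_erase.2 ⟨?_, hb⟩, mem_erase.2 ⟨?_, hc⟩⟩
    · rintro rfl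
      exact hq c hbcE
    · rintro rfl
      exact hne (hE.injOn_snd hbcE hpq rfl)

lemma card_avoids_erase_eq (hE : IsIncreasingLinearForest A E) (hpq : (p, q) ∈ E)
    (hq : ∀ c, (q, c) ∉ E) :
    #{l ∈ A.arrangements | Avoids (E.erase (p, q)) l} =
      #{l ∈ A.arrangements | Avoids E l} +
        #{m ∈ (A.erase q).arrangements | Avoids (E.erase (p, q)) m} := by
  obtain ⟨hpA, hqA⟩ := mem_product.1 (hE.subset hpq)
  have hpE (c : α) : (p, c) ∉ E.erase (p, q) := fun hc =>
    (mem_erase.1 hc).1 (hE.injOn_fst (mem_of_mem_erase hc) hpq rfl)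
  have hqE (c : α) : (q, c) ∉ E.erase (p, q) := fun hc => hq c (mem_of_mem_erase hc)
  rw [← card_filter_avoids_infix_eq hpA hqA (hE.lt _ hpq).ne hpE hqE,
    ← card_filter_add_card_filter_not (fun l => [p, q] <:+: l), filter_filter, filter_filter,
    add_comm]
  congr 2
  refine filter_congr fun l _ => ?_
  have h := avoids_insert_iff (E := E.erase (p, q)) (p := p) (q := q) (l := l)
  rwa [insert_erase hpq, Iff.comm] at h

end IsIncreasingLinearForest

theorem IsIncreasingLinearForest.card_filter_avoids {A : Finset α} {E : Finset (α × α)}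
    (hE : IsIncreasingLinearForest A E) {m : ℕ} (hA : #A = m + #E) :
    (#{l ∈ A.arrangements | Avoids E l} : ℤ) = avoidCount m #E := by
  induction hk : #E generalizing m A E with
  | zero =>
    have h_all (l : List α) : Avoids ∅ l := by
      simp [Avoids, List.isChain_iff_forall_rel_of_append_cons_cons]
    rw [card_eq_zero.1 hk, filter_true_of_mem fun l _ => h_all l, card_arrangements, hA, hk]
    rfl
  | succ k ih =>
    obtain ⟨p, q, hpq, hq⟩ := hE.exists_sink (card_pos.1 (by omega))
    have hk' : #(E.erase (p, q)) = k := by rw [card_erase_of_mem hpq, hk]; rfl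
    have hA' : #(A.erase q) = m + k := by
      rw [card_erase_of_mem (mem_product.1 (hE.subset hpq)).2]; omega
    have h₁ := ih (hE.mono (erase_subset _ _)) (m := m + 1) (by omega) hk'
    have h₂ := ih (hE.erase_sink hpq hq) (hk' ▸ hA') hk'
    rw [avoidCount, ← h₁, ← h₂, hE.card_avoids_erase_eq hpq hq]
    push_cast
    ring

end Forest

end Arrangements

def risePairs (s n : ℕ) : Finset (ℕ × ℕ) :=
  (range (n - s)).image fun a => (a, a + s)

section Rises

variable {s n : ℕ}

lemma mem_risePairs {a b : ℕ} : (a, b) ∈ risePairs s n ↔ a < n - s ∧ b = a + s := by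
  simp [risePairs, eq_comm]

lemma card_risePairs : #(risePairs s n) = n - s := by
  rw [risePairs, Finset.card_image_of_injective _ fun a b h => congrArg Prod.fst h, card_range]

lemma isIncreasingLinearForest_risePairs (hs : 0 < s) :
    IsIncreasingLinearForest (range n) (risePairs s n) where
  subset := by
    rintro ⟨a, b⟩ h
    rw [mem_risePairs] at h
    simp only [mem_product, mem_range]
    omega
  lt := by
    rintro ⟨a, b⟩ h
    rw [mem_risePairs] at h
    omega
  injOn_fst := by
    rintro ⟨a, b⟩ h ⟨a', b'⟩ h' (rfl : a = a')
    rw [mem_coe, mem_risePairs] at h h'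
    simp only [Prod.mk.injEq, true_and]
    omega
  injOn_snd := by
    rintro ⟨a, b⟩ h ⟨a', b'⟩ h' (rfl : b = b')
    rw [mem_coe, mem_risePairs] at h h'
    simp only [Prod.mk.injEq, and_true]
    omega

def permToNatList (n : ℕ) : Equiv.Perm (Fin n) ↪ List ℕ where
  toFun π := List.ofFn fun i => (π i : ℕ)
  inj' _ _ h := Equiv.ext fun i => Fin.ext (congrFun (List.ofFn_injective h) i)

lemma permToNatList_apply (π : Equiv.Perm (Fin n)) :
    permToNatList n π = List.ofFn fun i => (π i : ℕ) :=
  rfl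

lemma arrangements_range_eq_map : (range n).arrangements = univ.map (permToNatList n) := by
  refine (eq_of_subset_of_card_le ?_ ?_).symm
  · intro l hl
    obtain ⟨π, -, rfl⟩ := mem_map.1 hl
    refine mem_arrangements_iff_nodup.2 ⟨List.nodup_ofFn.2 fun i j h => π.injective (Fin.ext h),
      fun x => ?_⟩
    simp only [permToNatList_apply, List.mem_ofFn, mem_range]
    exact ⟨fun ⟨i, hi⟩ => hi ▸ (π i).isLt, fun hx => ⟨π.symm ⟨x, hx⟩, by simp⟩⟩
  · rw [card_arrangements, card_map, Finset.card_univ, Fintype.card_perm, Fintype.card_fin,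
      card_range]

lemma card_noRise_eq_card_filter_avoids :
    #(noRise s n) = #{l ∈ (range n).arrangements | Avoids (risePairs s n) l} := by
  rw [arrangements_range_eq_map, filter_map, card_map, noRise]
  congr 1
  refine filter_congr fun π _ => ?_
  simp only [Function.comp_apply, permToNatList_apply, Avoids, List.isChain_ofFn, mem_risePairs]
  constructor
  · intro h i hi hrise
    exact h ⟨i, by omega⟩ ⟨i + 1, hi⟩ rfl (by omega)
  · rintro h ⟨i, hi⟩ ⟨j, hj⟩ (rfl : j = i + 1) hrise
    exact h i hj (by omega)

lemma card_noRise_add_eq_avoidCount (hs : 0 < s) (k : ℕ) :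
    (#(noRise s (s + k)) : ℤ) = avoidCount s k := by
  rw [card_noRise_eq_card_filter_avoids,
    (isIncreasingLinearForest_risePairs hs).card_filter_avoids (m := s)
      (by rw [card_range, card_risePairs]; omega),
    card_risePairs, Nat.add_sub_cancel_left]

end Rises

/-- For `s ≥ 1` and `n ≥ s + 1`,
`a_{1,s}(n) = (n-1)·a_{1,s}(n-1) + (n-s-1)·a_{1,s}(n-2)`, read in the integers. -/
theorem noRise_recurrence (s n : ℕ) (hs : 1 ≤ s) (hn : s + 1 ≤ n) :
    ((noRise s n).card : ℤ) =
      ((n : ℤ) - 1) * (noRise s (n - 1)).card +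
        ((n : ℤ) - (s : ℤ) - 1) * (noRise s (n - 2)).card := by
  obtain ⟨k, rfl⟩ := Nat.exists_eq_add_of_le hn
  rcases k with _ | k
  · have h₀ := card_noRise_add_eq_avoidCount hs 0
    rw [Nat.add_zero] at h₀
    rw [Nat.add_zero, Nat.add_sub_cancel, card_noRise_add_eq_avoidCount hs 1, h₀, avoidCount_one]
    push_cast
    ring
  · rw [show s + 1 + (k + 1) = s + (k + 2) by ring, show s + (k + 2) - 1 = s + (k + 1) by omega,
      show s + (k + 2) - 2 = s + k by omega, card_noRise_add_eq_avoidCount hs,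
      card_noRise_add_eq_avoidCount hs, card_noRise_add_eq_avoidCount hs, avoidCount_add_two]
    push_cast
    ring
end

section
/- (Lemma 1) For every integer n ≥ 2, a(n) = (n−2)·a(n−1) + b(n−1) − c(n−1), where a(m) is the number of permutations of {1,…,m} with no violation, b(m) is the number with exactly one violation, and c(m) is the number with exactly one violation which moreover occurs at the last position i = m−1; the equation is read in the integers. -/
/-- Index `i` is a violation of the permutation `π` of `{0,…,m-1}`
(equivalently `{1,…,m}`): `|π (i+1) - π i| = 1`. -/
def IsViolation (m : ℕ) (π : Equiv.Perm (Fin m)) (i : Fin m) : Prop :=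
  ∃ j : Fin m, (j : ℕ) = (i : ℕ) + 1 ∧
    |((π j : ℕ) : ℤ) - ((π i : ℕ) : ℤ)| = 1

instance (m : ℕ) (π : Equiv.Perm (Fin m)) (i : Fin m) :
    Decidable (IsViolation m π i) := by unfold IsViolation; infer_instance

/-- The number of violations of `π`. -/
def violCount (m : ℕ) (π : Equiv.Perm (Fin m)) : ℕ :=
  (Finset.univ.filter fun i : Fin m => IsViolation m π i).card

/-- The set of permutations of `{1,…,m}` with no violation, counted by `a(m)`. -/
def noViol (m : ℕ) : Finset (Equiv.Perm (Fin m)) :=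
  Finset.univ.filter fun π => violCount m π = 0

/-- The set of permutations of `{1,…,m}` with exactly one violation, counted by `b(m)`. -/
def oneViol (m : ℕ) : Finset (Equiv.Perm (Fin m)) :=
  Finset.univ.filter fun π => violCount m π = 1

/-- The set of permutations of `{1,…,m}` with exactly one violation, occurring at the
last position `i = m - 1` (in `1`-based indexing, i.e. between the last two entries);
counted by `c(m)`. -/
def oneViolLast (m : ℕ) : Finset (Equiv.Perm (Fin m)) :=
  Finset.univ.filter fun π => violCount m π = 1 ∧
    ∃ i : Fin m, (i : ℕ) + 2 = m ∧ IsViolation m π i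

open Finset Equiv

namespace L1Aux

variable {m : ℕ}

/-- insert value `x` at the last position, lifting other values around `x`. -/
def ins (x : Fin (m+1)) (σ : Equiv.Perm (Fin m)) : Equiv.Perm (Fin (m+1)) :=
  finSuccEquivLast.trans ((σ.optionCongr).trans (finSuccEquiv' x).symm)

@[simp] lemma ins_castSucc (x : Fin (m+1)) (σ : Equiv.Perm (Fin m)) (i : Fin m) :
    ins x σ i.castSucc = x.succAbove (σ i) := by
  simp [ins]

@[simp] lemma ins_last (x : Fin (m+1)) (σ : Equiv.Perm (Fin m)) :
    ins x σ (Fin.last m) = x := by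
  simp [ins]

/-- remove the last entry, collapsing values around it. -/
def rem (π : Equiv.Perm (Fin (m+1))) : Equiv.Perm (Fin m) :=
  Equiv.removeNone
    (finSuccEquivLast.symm.trans (π.trans (finSuccEquiv' (π (Fin.last m)))))

lemma rem_apply (π : Equiv.Perm (Fin (m+1))) (i : Fin m) :
    (π (Fin.last m)).succAbove (rem π i) = π i.castSucc := by
  have hmem : π i.castSucc ≠ π (Fin.last m) := by
    intro h
    have h2 := π.injective h
    have h3 : (i:ℕ) = m := by simpa [Fin.ext_iff] using h2
    exact absurd h3 (by have := i.isLt; omega)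
  obtain ⟨j, hj⟩ := Fin.exists_succAbove_eq hmem
  have he2 : (finSuccEquivLast.symm.trans (π.trans (finSuccEquiv' (π (Fin.last m)))))
      (some i) = some j := by
    simp only [Equiv.trans_apply, finSuccEquivLast_symm_some, ← hj, finSuccEquiv'_succAbove]
  have h3 := Equiv.removeNone_some _ ⟨j, he2⟩
  rw [he2] at h3
  rw [show rem π i = j from Option.some_injective _ h3, hj]

lemma ins_rem (π : Equiv.Perm (Fin (m+1))) : ins (π (Fin.last m)) (rem π) = π := by
  refine Equiv.ext fun i => ?_
  induction i using Fin.lastCases with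
  | last => simp
  | cast i' => rw [ins_castSucc, rem_apply]

lemma rem_ins (x : Fin (m+1)) (σ : Equiv.Perm (Fin m)) : rem (ins x σ) = σ := by
  refine Equiv.ext fun i => ?_
  have h1 : (ins x σ (Fin.last m)).succAbove (rem (ins x σ) i) = ins x σ i.castSucc :=
    rem_apply _ i
  rw [ins_last, ins_castSucc] at h1
  exact Fin.succAbove_right_injective h1

lemma coe_succAbove (x : Fin (m+1)) (a : Fin m) :
    ((x.succAbove a : Fin (m+1)) : ℕ) = if (a:ℕ) < (x:ℕ) then (a:ℕ) else (a:ℕ)+1 := by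
  rw [Fin.succAbove]
  split_ifs with h1 h2 h2 <;> simp_all [Fin.lt_def]

/-- arithmetic: lifting preserves/creates adjacency. -/
lemma abs_lift (x a b : ℕ)
    (la lb : ℕ) (hla : la = if a < x then a else a + 1) (hlb : lb = if b < x then b else b + 1) :
    (|(lb : ℤ) - (la : ℤ)| = 1) ↔ (|(b:ℤ) - (a:ℤ)| = 1 ∧ max a b ≠ x) := by
  have habs : ∀ p q : ℤ, |p - q| = 1 ↔ (p - q = 1 ∨ p - q = -1) := fun p q =>
    abs_eq (by norm_num)
  rw [habs, habs]
  split_ifs at hla hlb <;> omega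

lemma abs_end (x y : ℕ) (ly : ℕ) (hly : ly = if y < x then y else y + 1) :
    (|(x : ℤ) - (ly : ℤ)| = 1) ↔ (x = y ∨ x = y + 1) := by
  have habs : ∀ p q : ℤ, |p - q| = 1 ↔ (p - q = 1 ∨ p - q = -1) := fun p q =>
    abs_eq (by norm_num)
  rw [habs]
  split_ifs at hly <;> omega

/-- The insertion condition. -/
def Good (σ : Equiv.Perm (Fin m)) (x : Fin (m+1)) : Prop :=
  (∀ i j : Fin m, (j : ℕ) = (i : ℕ) + 1 →
      |((σ j : ℕ) : ℤ) - ((σ i : ℕ) : ℤ)| = 1 → (x : ℕ) = max (σ i : ℕ) (σ j : ℕ)) ∧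
  (∀ i : Fin m, (i : ℕ) + 1 = m → ((x : ℕ) ≠ (σ i : ℕ) ∧ (x : ℕ) ≠ (σ i : ℕ) + 1))

instance (σ : Equiv.Perm (Fin m)) (x : Fin (m+1)) : Decidable (Good σ x) := by
  unfold Good; infer_instance

lemma mem_noViol_iff (k : ℕ) (π : Equiv.Perm (Fin k)) :
    π ∈ noViol k ↔ ∀ i, ¬ IsViolation k π i := by
  simp [noViol, violCount, Finset.card_eq_zero, Finset.filter_eq_empty_iff]

lemma ins_noViol_iff (x : Fin (m+1)) (σ : Equiv.Perm (Fin m)) :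
    ins x σ ∈ noViol (m+1) ↔ Good σ x := by
  rw [mem_noViol_iff]
  constructor
  · intro H
    constructor
    · intro i j hj habs
      by_contra hne
      refine H i.castSucc ⟨j.castSucc, by simp [hj], ?_⟩
      rw [ins_castSucc, ins_castSucc]
      rw [abs_lift (x:ℕ) (σ i : ℕ) (σ j : ℕ) _ _ (coe_succAbove x (σ i)) (coe_succAbove x (σ j))]
      exact ⟨habs, fun h => hne h.symm⟩
    · intro i hi
      by_contra hne
      push_neg at hne
      refine H i.castSucc ⟨Fin.last m, by simp [hi.symm], ?_⟩
      rw [ins_castSucc, ins_last]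
      rw [abs_end (x:ℕ) (σ i : ℕ) _ (coe_succAbove x (σ i))]
      by_cases h : (x:ℕ) = (σ i : ℕ)
      · exact Or.inl h
      · exact Or.inr (hne h)
  · rintro ⟨H1, H2⟩ i ⟨j, hj, habs⟩
    have hi_lt : (i : ℕ) < m := by have := j.isLt; omega
    set i' : Fin m := ⟨(i:ℕ), hi_lt⟩ with hi'
    have hic : i = Fin.castSucc i' := by simp [Fin.ext_iff, hi']
    by_cases hjm : (j : ℕ) = m
    · have hjc : j = Fin.last m := by simp [Fin.ext_iff, hjm]
      rw [hic, hjc, ins_castSucc, ins_last] at habs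
      rw [abs_end (x:ℕ) (σ i' : ℕ) _ (coe_succAbove x (σ i'))] at habs
      have := H2 i' (by simp [hi']; omega)
      omega
    · have hj_lt : (j : ℕ) < m := by have := j.isLt; omega
      set j' : Fin m := ⟨(j:ℕ), hj_lt⟩ with hj'
      have hjc : j = Fin.castSucc j' := by simp [Fin.ext_iff, hj']
      rw [hic, hjc, ins_castSucc, ins_castSucc] at habs
      rw [abs_lift (x:ℕ) (σ i' : ℕ) (σ j' : ℕ) _ _ (coe_succAbove x (σ i'))
        (coe_succAbove x (σ j'))] at habs
      exact habs.2 (H1 i' j' (by simp [hi', hj']; omega) habs.1).symm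


def goodSet (σ : Equiv.Perm (Fin m)) : Finset (Fin (m+1)) :=
  Finset.univ.filter fun x => Good σ x

lemma mem_goodSet {σ : Equiv.Perm (Fin m)} {x : Fin (m+1)} :
    x ∈ goodSet σ ↔ Good σ x := by simp [goodSet]

lemma count0 (hm : 1 ≤ m) (σ : Equiv.Perm (Fin m)) (h : ∀ i, ¬ IsViolation m σ i) :
    (goodSet σ).card = m - 1 := by
  set i₀ : Fin m := ⟨m - 1, by omega⟩ with hi₀
  set y : ℕ := (σ i₀ : ℕ) with hy
  have hylt : y < m := (σ i₀).isLt
  have hgood : ∀ x : Fin (m+1), Good σ x ↔ ((x:ℕ) ≠ y ∧ (x:ℕ) ≠ y + 1) := by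
    intro x
    constructor
    · intro hg
      exact hg.2 i₀ (by simp [hi₀]; omega)
    · intro hx
      refine ⟨fun i j hj habs => absurd ⟨j, hj, habs⟩ (h i), fun i hi => ?_⟩
      have hii : i = i₀ := Fin.ext (by simp [hi₀]; omega)
      rw [hii]
      exact hx
  have hset : goodSet σ =
      (Finset.univ : Finset (Fin (m+1))) \ {⟨y, by omega⟩, ⟨y+1, by omega⟩} := by
    ext x
    simp [mem_goodSet, hgood, Fin.ext_iff]
  rw [hset, Finset.card_sdiff_of_subset (by simp)]
  have h2 : ({⟨y, by omega⟩, ⟨y+1, by omega⟩} : Finset (Fin (m+1))).card = 2 := by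
    rw [Finset.card_insert_of_notMem (by simp [Fin.ext_iff]), Finset.card_singleton]
  rw [h2]
  simp only [Finset.card_univ, Fintype.card_fin]
  omega

lemma violCount_one {σ : Equiv.Perm (Fin m)} (h : violCount m σ = 1) :
    ∃ i₀, IsViolation m σ i₀ ∧ ∀ i, IsViolation m σ i → i = i₀ := by
  rw [violCount, Finset.card_eq_one] at h
  obtain ⟨i₀, hi⟩ := h
  have h1 : ∀ i : Fin m, i ∈ Finset.univ.filter (fun i => IsViolation m σ i) ↔ i ∈ ({i₀} : Finset (Fin m)) := by
    rw [hi]; intro i; rfl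
  refine ⟨i₀, ?_, fun i hvi => ?_⟩
  · have := (h1 i₀).mpr (Finset.mem_singleton_self i₀)
    exact (Finset.mem_filter.mp this).2
  · have := (h1 i).mp (Finset.mem_filter.mpr ⟨Finset.mem_univ i, hvi⟩)
    exact Finset.mem_singleton.mp this

lemma inj_val (σ : Equiv.Perm (Fin m)) {p q : Fin m} (h : (σ p : ℕ) = (σ q : ℕ)) :
    (p : ℕ) = (q : ℕ) :=
  congrArg Fin.val (σ.injective (Fin.ext h))

lemma abs_cases' {a b : ℕ} (h : |(b : ℤ) - (a : ℤ)| = 1) : b = a + 1 ∨ a = b + 1 := by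
  rcases (abs_eq (by norm_num : (0:ℤ) ≤ 1)).mp h with h' | h' <;> omega

lemma countNotLast (σ : Equiv.Perm (Fin m)) (h1 : violCount m σ = 1)
    (hnl : ¬ ∃ i : Fin m, (i : ℕ) + 2 = m ∧ IsViolation m σ i) :
    (goodSet σ).card = 1 := by
  obtain ⟨i₀, hvi₀, huniq⟩ := violCount_one h1
  obtain ⟨j₀, hj₀, habs₀⟩ := hvi₀
  push_neg at hnl
  have hnl₀ : (i₀ : ℕ) + 2 ≠ m := fun h => hnl i₀ h ⟨j₀, hj₀, habs₀⟩
  have hjlt : (j₀ : ℕ) < m := j₀.isLt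
  have hm2 : (i₀ : ℕ) + 2 < m := by omega
  set a : ℕ := (σ i₀ : ℕ) with ha
  set b : ℕ := (σ j₀ : ℕ) with hb
  have hd : b = a + 1 ∨ a = b + 1 := abs_cases' habs₀
  have halt : a < m := (σ i₀).isLt
  have hblt : b < m := (σ j₀).isLt
  set v : ℕ := max a b with hv
  set iL : Fin m := ⟨m - 1, by omega⟩ with hiL
  set y : ℕ := (σ iL : ℕ) with hy2
  have hyi : (iL : ℕ) ≠ (i₀ : ℕ) := by simp [hiL]; omega
  have hyj : (iL : ℕ) ≠ (j₀ : ℕ) := by simp [hiL]; omega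
  have hya : y ≠ a := fun h => hyi (inj_val σ h)
  have hyb : y ≠ b := fun h => hyj (inj_val σ h)
  have hset : goodSet σ = {⟨v, by omega⟩} := by
    ext x
    simp only [mem_goodSet, Finset.mem_singleton]
    constructor
    · intro hg
      exact Fin.ext (hg.1 i₀ j₀ hj₀ habs₀)
    · rintro rfl
      constructor
      · intro i j hj habs
        have hii : i = i₀ := huniq i ⟨j, hj, habs⟩
        subst hii
        have hjj : j = j₀ := Fin.ext (by omega)
        subst hjj
        rfl
      · intro i hi
        have hii : i = iL := Fin.ext (by simp [hiL]; omega)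
        subst hii
        constructor <;> simp only [] <;> omega
  rw [hset, Finset.card_singleton]

lemma countLast (σ : Equiv.Perm (Fin m)) (h1 : violCount m σ = 1)
    (hl : ∃ i : Fin m, (i : ℕ) + 2 = m ∧ IsViolation m σ i) :
    goodSet σ = ∅ := by
  obtain ⟨i₀, hm0, hvi₀⟩ := hl
  obtain ⟨j₀, hj₀, habs₀⟩ := hvi₀
  set a : ℕ := (σ i₀ : ℕ) with ha
  set b : ℕ := (σ j₀ : ℕ) with hb
  have hd : b = a + 1 ∨ a = b + 1 := abs_cases' habs₀
  rw [Finset.eq_empty_iff_forall_notMem]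
  intro x hx
  rw [mem_goodSet] at hx
  have hxv : (x : ℕ) = max a b := hx.1 i₀ j₀ hj₀ habs₀
  have hjL : (j₀ : ℕ) + 1 = m := by omega
  have := hx.2 j₀ hjL
  omega

lemma count2 (σ : Equiv.Perm (Fin m)) (h : 2 ≤ violCount m σ) :
    goodSet σ = ∅ := by
  obtain ⟨i₁, hm1, i₂, hm2, hne⟩ := Finset.one_lt_card.mp (by omega : 1 < violCount m σ)
  have hv₁ := (Finset.mem_filter.mp hm1).2
  have hv₂ := (Finset.mem_filter.mp hm2).2
  obtain ⟨j₁, hj₁, habs₁⟩ := hv₁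
  obtain ⟨j₂, hj₂, habs₂⟩ := hv₂
  have hne' : (i₁ : ℕ) ≠ (i₂ : ℕ) := fun h => hne (Fin.ext h)
  set a₁ : ℕ := (σ i₁ : ℕ)
  set b₁ : ℕ := (σ j₁ : ℕ)
  set a₂ : ℕ := (σ i₂ : ℕ)
  set b₂ : ℕ := (σ j₂ : ℕ)
  have hd₁ : b₁ = a₁ + 1 ∨ a₁ = b₁ + 1 := abs_cases' habs₁
  have hd₂ : b₂ = a₂ + 1 ∨ a₂ = b₂ + 1 := abs_cases' habs₂
  rw [Finset.eq_empty_iff_forall_notMem]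
  intro x hx
  rw [mem_goodSet] at hx
  have hx₁ : (x : ℕ) = max a₁ b₁ := hx.1 i₁ j₁ hj₁ habs₁
  have hx₂ : (x : ℕ) = max a₂ b₂ := hx.1 i₂ j₂ hj₂ habs₂
  rcases hd₁ with h1 | h1 <;> rcases hd₂ with h2 | h2
  · have e1 : b₁ = b₂ := by omega
    have := inj_val σ e1
    omega
  · have e1 : b₁ = a₂ := by omega
    have p1 := inj_val σ e1
    have e2 : a₁ = b₂ := by omega
    have p2 := inj_val σ e2
    omega
  · have e1 : a₁ = b₂ := by omega
    have p1 := inj_val σ e1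
    have e2 : b₁ = a₂ := by omega
    have p2 := inj_val σ e2
    omega
  · have e1 : a₁ = a₂ := by omega
    have := inj_val σ e1
    omega

lemma good_card (hm : 1 ≤ m) (σ : Equiv.Perm (Fin m)) :
    ((goodSet σ).card : ℤ) =
      ((m : ℤ) - 1) * (if σ ∈ noViol m then 1 else 0)
        + (if σ ∈ oneViol m then 1 else 0)
        - (if σ ∈ oneViolLast m then 1 else 0) := by
  by_cases h0 : violCount m σ = 0
  · have m1 : σ ∈ noViol m := by simp [noViol, h0]
    have m2 : σ ∉ oneViol m := by simp [oneViol, h0]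
    have m3 : σ ∉ oneViolLast m := by simp [oneViolLast, h0]
    rw [count0 hm σ ((mem_noViol_iff m σ).mp m1)]
    simp only [m1, m2, m3, if_true, if_false, if_pos, if_neg]
    rw [Nat.cast_sub hm]
    push_cast
    ring
  · have m1 : σ ∉ noViol m := by simp [noViol, h0]
    by_cases h1 : violCount m σ = 1
    · have m2 : σ ∈ oneViol m := by simp [oneViol, h1]
      by_cases hl : ∃ i : Fin m, (i : ℕ) + 2 = m ∧ IsViolation m σ i
      · have m3 : σ ∈ oneViolLast m := by
          simp only [oneViolLast, Finset.mem_filter, Finset.mem_univ, true_and]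
          exact ⟨h1, hl⟩
        rw [countLast σ h1 hl]
        simp [m1, m2, m3]
      · have m3 : σ ∉ oneViolLast m := by
          simp only [oneViolLast, Finset.mem_filter, Finset.mem_univ, true_and, not_and]
          exact fun _ => hl
        rw [countNotLast σ h1 hl]
        simp [m1, m2, m3]
    · have m2 : σ ∉ oneViol m := by simp [oneViol, h1]
      have m3 : σ ∉ oneViolLast m := by
        simp only [oneViolLast, Finset.mem_filter, Finset.mem_univ, true_and, not_and]
        exact fun h => absurd h h1
      rw [count2 σ (by omega)]
      simp [m1, m2, m3]

end L1Aux

/-- Lemma 1: for `n ≥ 2`, `a(n) = (n-2)·a(n-1) + b(n-1) - c(n-1)`, read in the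
integers. -/
theorem lemma1 (n : ℕ) (hn : 2 ≤ n) :
    ((noViol n).card : ℤ) =
      ((n : ℤ) - 2) * (noViol (n - 1)).card + (oneViol (n - 1)).card
        - (oneViolLast (n - 1)).card := by
  obtain ⟨m, rfl⟩ : ∃ m, n = m + 1 := ⟨n - 1, by omega⟩
  have hm : 1 ≤ m := by omega
  simp only [Nat.succ_sub_one]
  have step1 : (noViol (m+1)).card
      = (Finset.univ.filter fun p : Equiv.Perm (Fin m) × Fin (m+1) =>
          L1Aux.ins p.2 p.1 ∈ noViol (m+1)).card := by
    refine Finset.card_bij' (fun π _ => (L1Aux.rem π, π (Fin.last m)))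
      (fun p _ => L1Aux.ins p.2 p.1) ?_ ?_ ?_ ?_
    · intro π hπ
      simp only [Finset.mem_filter, Finset.mem_univ, true_and]
      rw [L1Aux.ins_rem]
      exact hπ
    · intro p hp
      simp only [Finset.mem_filter, Finset.mem_univ, true_and] at hp
      exact hp
    · intro π hπ
      exact L1Aux.ins_rem π
    · intro p hp
      ext
      · simp [L1Aux.rem_ins]
      · simp [L1Aux.ins_last]
  have step2 : (Finset.univ.filter fun p : Equiv.Perm (Fin m) × Fin (m+1) =>
          L1Aux.ins p.2 p.1 ∈ noViol (m+1)).card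
      = ∑ σ : Equiv.Perm (Fin m), (L1Aux.goodSet σ).card := by
    rw [Finset.card_filter, Fintype.sum_prod_type]
    refine Finset.sum_congr rfl fun σ _ => ?_
    rw [show (L1Aux.goodSet σ).card
        = (Finset.univ.filter fun x : Fin (m+1) => L1Aux.ins x σ ∈ noViol (m+1)).card by
      congr 1
      ext x
      simp [L1Aux.mem_goodSet, L1Aux.ins_noViol_iff]]
    rw [Finset.card_filter]
  rw [step1, step2]
  push_cast
  rw [Finset.sum_congr rfl fun σ _ => L1Aux.good_card hm σ]
  rw [Finset.sum_sub_distrib, Finset.sum_add_distrib, ← Finset.mul_sum]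
  have e1 : ∑ σ : Equiv.Perm (Fin m), (if σ ∈ noViol m then (1:ℤ) else 0)
      = (noViol m).card := by
    rw [Finset.sum_boole]
    congr 1
    rw [Finset.filter_mem_eq_inter, Finset.univ_inter]
  have e2 : ∑ σ : Equiv.Perm (Fin m), (if σ ∈ oneViol m then (1:ℤ) else 0)
      = (oneViol m).card := by
    rw [Finset.sum_boole]
    congr 1
    rw [Finset.filter_mem_eq_inter, Finset.univ_inter]
  have e3 : ∑ σ : Equiv.Perm (Fin m), (if σ ∈ oneViolLast m then (1:ℤ) else 0)
      = (oneViolLast m).card := by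
    rw [Finset.sum_boole]
    congr 1
    rw [Finset.filter_mem_eq_inter, Finset.univ_inter]
  rw [e1, e2, e3]
  ring
end

section
/- (Lemma 3) For every integer n ≥ 2, c(n) = 2·a(n−1) + c(n−1), where a(m) is the number of permutations of {1,…,m} with no violation, and c(m) is the number of permutations of {1,…,m} with exactly one violation which moreover occurs at the last position i = m−1. -/
/-!
Deleting the last entry `v` of a permutation of `Fin (m + 2)` and standardizing the remaining
entries is a bijection onto pairs `(σ, v)` with `σ` a permutation of `Fin (m + 1)`. A violation of
`σ` survives unless `v` is inserted between its two values, and the new last pair is a violation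
iff `v` is adjacent to the last value of `σ`. Hence `v` completes `σ` to a permutation whose only
violation is the last one iff `σ` has no violation (two choices of `v`) or its only violation is
its last one (one choice: the larger value of that pair).
-/

open Finset

section Violations

variable {n : ℕ}

lemma isViolation_castSucc_iff (π : Equiv.Perm (Fin (n + 1))) (i : Fin n) :
    IsViolation (n + 1) π i.castSucc ↔
      (π i.succ : ℕ) = π i.castSucc + 1 ∨ (π i.castSucc : ℕ) = π i.succ + 1 := by
  constructor
  · rintro ⟨j, hj, h⟩
    obtain rfl : j = i.succ := Fin.ext (by simpa using hj)
    rw [abs_eq zero_le_one] at h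
    omega
  · intro h
    refine ⟨i.succ, by simp, ?_⟩
    rw [abs_eq zero_le_one]
    omega

lemma not_isViolation_last (π : Equiv.Perm (Fin (n + 1))) :
    ¬ IsViolation (n + 1) π (Fin.last n) := by
  rintro ⟨j, hj, -⟩
  have := j.isLt
  simp only [Fin.val_last] at hj
  omega

lemma mem_noViol_iff (π : Equiv.Perm (Fin n)) :
    π ∈ noViol n ↔ ∀ i, ¬ IsViolation n π i := by
  simp [noViol, violCount, filter_eq_empty_iff]

lemma mem_oneViolLast_iff (π : Equiv.Perm (Fin n)) :
    π ∈ oneViolLast n ↔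
      ∃ k : Fin n, (k : ℕ) + 2 = n ∧ ∀ i, IsViolation n π i ↔ i = k := by
  simp only [oneViolLast, violCount, mem_filter, mem_univ, true_and, card_eq_one,
    Finset.ext_iff, mem_singleton]
  constructor
  · rintro ⟨⟨k, hk⟩, i, hi, hvi⟩
    obtain rfl := (hk i).1 hvi
    exact ⟨i, hi, hk⟩
  · rintro ⟨k, hk, h⟩
    exact ⟨⟨k, h⟩, k, hk, (h k).2 rfl⟩

lemma mem_oneViolLast_add_two_iff (π : Equiv.Perm (Fin (n + 2))) :
    π ∈ oneViolLast (n + 2) ↔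
      IsViolation (n + 2) π (Fin.last n).castSucc ∧
        ∀ i : Fin n, ¬ IsViolation (n + 2) π i.castSucc.castSucc := by
  rw [mem_oneViolLast_iff]
  constructor
  · rintro ⟨k, hk, h⟩
    obtain rfl : k = (Fin.last n).castSucc := Fin.ext (by simp; omega)
    refine ⟨(h _).2 rfl, fun i hi => ?_⟩
    exact Fin.castSucc_ne_last i (Fin.castSucc_injective _ ((h _).1 hi))
  · rintro ⟨hlast, h⟩
    refine ⟨(Fin.last n).castSucc, by simp, fun k => ⟨fun hk => ?_, fun hk => hk ▸ hlast⟩⟩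
    induction k using Fin.lastCases with
    | last => exact absurd hk (not_isViolation_last π)
    | cast k =>
      induction k using Fin.lastCases with
      | last => rfl
      | cast i => exact absurd hk (h i)

lemma notMem_oneViolLast_of_mem_noViol {π : Equiv.Perm (Fin n)} (h : π ∈ noViol n) :
    π ∉ oneViolLast n := by
  rw [mem_oneViolLast_iff]
  rintro ⟨k, -, hk⟩
  exact (mem_noViol_iff π).1 h k ((hk k).2 rfl)

end Violations

section SnocPerm

variable {m : ℕ}

/-- The permutation of `Fin (m + 2)` ending in `v` whose first `m + 1` entries are in the
relative order given by `σ`. -/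
noncomputable def snocPerm (σ : Equiv.Perm (Fin (m + 1))) (v : Fin (m + 2)) :
    Equiv.Perm (Fin (m + 2)) :=
  Equiv.ofBijective (Fin.snoc (fun j => v.succAbove (σ j)) v) <|
    Finite.injective_iff_bijective.mp <|
      Fin.snoc_injective_of_injective (Fin.succAbove_right_injective.comp σ.injective)
        (fun ⟨_, hj⟩ => Fin.succAbove_ne v _ hj)

@[simp]
lemma snocPerm_castSucc (σ : Equiv.Perm (Fin (m + 1))) (v : Fin (m + 2)) (j : Fin (m + 1)) :
    snocPerm σ v j.castSucc = v.succAbove (σ j) := by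
  simp [snocPerm]

@[simp]
lemma snocPerm_last (σ : Equiv.Perm (Fin (m + 1))) (v : Fin (m + 2)) :
    snocPerm σ v (Fin.last (m + 1)) = v := by
  simp [snocPerm]

lemma snocPerm_injective :
    Function.Injective fun p : Equiv.Perm (Fin (m + 1)) × Fin (m + 2) => snocPerm p.1 p.2 := by
  rintro ⟨σ, v⟩ ⟨τ, w⟩ h
  have hv : v = w := by simpa using congr($h (Fin.last (m + 1)))
  subst hv
  have hστ : σ = τ := Equiv.ext fun j =>
    Fin.succAbove_right_injective (p := v) (by simpa using congr($h j.castSucc))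
  rw [hστ]

lemma card_perm_prod_fin :
    Fintype.card (Equiv.Perm (Fin (m + 1)) × Fin (m + 2)) =
      Fintype.card (Equiv.Perm (Fin (m + 2))) := by
  simp only [Fintype.card_prod, Fintype.card_perm, Fintype.card_fin, Nat.factorial_succ (m + 1)]
  ring

noncomputable def snocPermEquiv :
    Equiv.Perm (Fin (m + 1)) × Fin (m + 2) ≃ Equiv.Perm (Fin (m + 2)) :=
  Equiv.ofBijective _ <|
    (Fintype.bijective_iff_injective_and_card _).mpr ⟨snocPerm_injective, card_perm_prod_fin⟩

lemma val_succAbove (v : Fin (m + 2)) (x : Fin (m + 1)) :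
    (v.succAbove x : ℕ) = if (x : ℕ) < v then (x : ℕ) else (x : ℕ) + 1 := by
  by_cases h : (x : ℕ) < v
  · rw [Fin.succAbove_of_castSucc_lt _ _ (by simpa [Fin.lt_def] using h), if_pos h]; rfl
  · rw [Fin.succAbove_of_le_castSucc _ _ (by simpa [Fin.le_def] using h), if_neg h]; rfl

lemma isViolation_snocPerm_last_iff (σ : Equiv.Perm (Fin (m + 1))) (v : Fin (m + 2)) :
    IsViolation (m + 2) (snocPerm σ v) (Fin.last m).castSucc ↔
      (v : ℕ) = σ (Fin.last m) ∨ (v : ℕ) = σ (Fin.last m) + 1 := by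
  rw [isViolation_castSucc_iff, Fin.succ_last, snocPerm_last, snocPerm_castSucc, val_succAbove]
  split_ifs <;> omega

/-- A violation `{a, a + 1}` of `σ` is broken exactly when `v = a + 1` is inserted between its
values. -/
lemma isViolation_snocPerm_castSucc_iff (σ : Equiv.Perm (Fin (m + 1))) (v : Fin (m + 2))
    (i : Fin m) :
    IsViolation (m + 2) (snocPerm σ v) i.castSucc.castSucc ↔
      IsViolation (m + 1) σ i.castSucc ∧ (v : ℕ) ≠ max (σ i.castSucc : ℕ) (σ i.succ) := by
  rw [isViolation_castSucc_iff, isViolation_castSucc_iff, Fin.succ_castSucc, snocPerm_castSucc,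
    snocPerm_castSucc, val_succAbove, val_succAbove]
  split_ifs <;> omega

end SnocPerm

section Counting

variable {m : ℕ}

def IsLastViolationValue (σ : Equiv.Perm (Fin (m + 1))) (v : Fin (m + 2)) : Prop :=
  ((v : ℕ) = σ (Fin.last m) ∨ (v : ℕ) = σ (Fin.last m) + 1) ∧
    ∀ i : Fin m, IsViolation (m + 1) σ i.castSucc → (v : ℕ) = max (σ i.castSucc : ℕ) (σ i.succ)

instance (σ : Equiv.Perm (Fin (m + 1))) : DecidablePred (IsLastViolationValue σ) := by
  unfold IsLastViolationValue; infer_instance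

lemma snocPerm_mem_oneViolLast_iff (σ : Equiv.Perm (Fin (m + 1))) (v : Fin (m + 2)) :
    snocPerm σ v ∈ oneViolLast (m + 2) ↔ IsLastViolationValue σ v := by
  simp only [mem_oneViolLast_add_two_iff, isViolation_snocPerm_last_iff,
    isViolation_snocPerm_castSucc_iff, not_and, not_not, IsLastViolationValue]

lemma card_oneViolLast_add_two :
    #(oneViolLast (m + 2)) = ∑ σ : Equiv.Perm (Fin (m + 1)), #{v | IsLastViolationValue σ v} :=
  calc #(oneViolLast (m + 2))
      = #{p : Equiv.Perm (Fin (m + 1)) × Fin (m + 2) | IsLastViolationValue p.1 p.2} :=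
        (card_equiv snocPermEquiv fun p =>
          (mem_filter_univ _).trans (snocPerm_mem_oneViolLast_iff p.1 p.2).symm).symm
    _ = ∑ σ : Equiv.Perm (Fin (m + 1)), #{v | IsLastViolationValue σ v} := by
        simp only [card_filter]
        exact Fintype.sum_prod_type _

lemma card_isLastViolationValue_of_mem_noViol {σ : Equiv.Perm (Fin (m + 1))}
    (h : σ ∈ noViol (m + 1)) : #{v | IsLastViolationValue σ v} = 2 := by
  have hlt := (σ (Fin.last m)).isLt
  have hv : ({v | IsLastViolationValue σ v} : Finset (Fin (m + 2))) =
      {⟨σ (Fin.last m), by omega⟩, ⟨σ (Fin.last m) + 1, by omega⟩} := by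
    ext v
    simp [IsLastViolationValue, (mem_noViol_iff σ).1 h, Fin.ext_iff]
  rw [hv, card_pair (by simp [Fin.ext_iff])]

lemma card_isLastViolationValue_of_mem_oneViolLast {σ : Equiv.Perm (Fin (m + 1))}
    (h : σ ∈ oneViolLast (m + 1)) : #{v | IsLastViolationValue σ v} = 1 := by
  obtain ⟨k, hk, hviol⟩ := (mem_oneViolLast_iff σ).1 h
  obtain ⟨m, rfl⟩ : ∃ m', m = m' + 1 := ⟨m - 1, by omega⟩
  obtain rfl : k = (Fin.last m).castSucc := Fin.ext (by simp; omega)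
  have hsucc : (Fin.last m).succ = Fin.last (m + 1) := rfl
  have hadj := (isViolation_castSucc_iff σ (Fin.last m)).1 ((hviol _).2 rfl)
  rw [hsucc] at hadj
  have hlt := (σ (Fin.last (m + 1))).isLt
  rw [card_eq_one]
  refine ⟨⟨max (σ (Fin.last m).castSucc : ℕ) (σ (Fin.last (m + 1))), by omega⟩, ?_⟩
  ext v
  simp only [IsLastViolationValue, hviol, Fin.castSucc_inj, forall_eq, hsucc, mem_filter_univ,
    mem_singleton]
  simp only [Fin.ext_iff]
  omega

lemma mem_noViol_or_mem_oneViolLast {σ : Equiv.Perm (Fin (m + 1))} {v : Fin (m + 2)}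
    (hv : IsLastViolationValue σ v) : σ ∈ noViol (m + 1) ∨ σ ∈ oneViolLast (m + 1) := by
  have hlast : ∀ k, IsViolation (m + 1) σ k → (k : ℕ) + 2 = m + 1 := by
    intro k hk
    induction k using Fin.lastCases with
    | last => exact absurd hk (not_isViolation_last σ)
    | cast i =>
      have hnear := hv.1
      have hmax := hv.2 i hk
      have hadj := (isViolation_castSucc_iff σ i).1 hk
      -- `v` is the larger value of the pair and `σ (Fin.last m)` is `v` or `v - 1`
      have : σ (Fin.last m) = σ i.castSucc ∨ σ (Fin.last m) = σ i.succ := by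
        simp only [Fin.ext_iff]; omega
      rcases this with h | h
      · exact absurd (σ.injective h).symm (Fin.castSucc_ne_last i)
      · simpa [Fin.ext_iff] using (σ.injective h).symm
  by_cases h0 : σ ∈ noViol (m + 1)
  · exact Or.inl h0
  rw [mem_noViol_iff] at h0
  push Not at h0
  obtain ⟨k, hk⟩ := h0
  refine Or.inr ((mem_oneViolLast_iff σ).2
    ⟨k, hlast k hk, fun i => ⟨fun hi => ?_, fun hi => hi ▸ hk⟩⟩)
  have := hlast i hi
  have := hlast k hk
  exact Fin.ext (by omega)

lemma card_isLastViolationValue (σ : Equiv.Perm (Fin (m + 1))) :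
    #{v | IsLastViolationValue σ v} =
      2 * (if σ ∈ noViol (m + 1) then 1 else 0) + (if σ ∈ oneViolLast (m + 1) then 1 else 0) := by
  by_cases h0 : σ ∈ noViol (m + 1)
  · simp [h0, notMem_oneViolLast_of_mem_noViol h0, card_isLastViolationValue_of_mem_noViol h0]
  by_cases h1 : σ ∈ oneViolLast (m + 1)
  · simp [h0, h1, card_isLastViolationValue_of_mem_oneViolLast h1]
  rw [if_neg h0, if_neg h1, card_eq_zero, filter_eq_empty_iff]
  exact fun v _ hv => (mem_noViol_or_mem_oneViolLast hv).elim h0 h1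

end Counting

/-- Lemma 3: for `n ≥ 2`, `c(n) = 2·a(n-1) + c(n-1)`. -/
theorem lemma3 (n : ℕ) (hn : 2 ≤ n) :
    (oneViolLast n).card = 2 * (noViol (n - 1)).card + (oneViolLast (n - 1)).card := by
  obtain ⟨m, rfl⟩ : ∃ m, n = m + 2 := ⟨n - 2, by omega⟩
  rw [card_oneViolLast_add_two]
  simp only [card_isLastViolationValue, sum_add_distrib, ← mul_sum, sum_boole,
    filter_mem_eq_inter, univ_inter, Nat.cast_id]
  rfl
end

section
/- For all positive integers r, s and n, the number a_{r,s}(n) of permutations π of {1,…,n} such that π_{i+r} − π_i ≠ s for all 1 ≤ i ≤ n−r equals Σ_α C^{(n,s)}_α · C^{(n,r)}_α · (−1)^{n − (a_1 + a_2 + ⋯ + a_n)} · a_1! · a_2! ⋯ a_n!, where the sum ranges over all integer partitions α of n, a_m denotes the multiplicity of the part m in α, and C^{(n,r)}_α denotes the number of set partitions of {1,…,n} in which every block is of the form {k, k+r, k+2r, …, k+(m−1)r} for some k and some m ≥ 1, and whose multiset of block sizes equals α. -/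
/-!
Inclusion–exclusion over the set `S ⊆ {0, …, n - r - 1}` of positions `i` at which
`π (i + r) = π i + s` is imposed. Linking `i` to `i + r` for `i ∈ S` cuts `{0, …, n - 1}` into
`r`-progressions, and this is a bijection between such `S` and the partitions counted by
`C^{(n,r)}`, with `n - |S|` blocks. A permutation meets the constraints of `S` exactly when it maps
every block increasingly onto an `s`-progression; the image blocks form a partition counted by
`C^{(n,s)}` with the same block sizes, and for a fixed image partition such permutations
correspond to the size-preserving bijections between the two sets of blocks, of which there are
`∏ aₘ!`. Grouping the signed sum by block sizes gives the formula.
-/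

/-- The set of permutations `π` of `{0,…,n-1}` (equivalently `{1,…,n}`) such that
`π (i+r) - π i ≠ s` for all valid indices `i`; its cardinality is `a_{r,s}(n)`. -/
def noShift (r s n : ℕ) : Finset (Equiv.Perm (Fin n)) :=
  Finset.univ.filter fun π =>
    ∀ i j : Fin n, (j : ℕ) = (i : ℕ) + r →
      ((π j : ℕ) : ℤ) - ((π i : ℕ) : ℤ) ≠ (s : ℤ)

/-- `C^{(n,r)}_α`: the number of set partitions of `{0,…,n-1}` (equivalently `{1,…,n}`)
in which every block is an arithmetic progression with common difference `r`,
i.e. of the form `{k, k+r, …, k+(m-1)r}` for some `k` and some `m ≥ 1`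
(singleton blocks qualify), and whose multiset of block sizes equals the
partition `α` of `n`. -/
noncomputable def tilingCount (n r : ℕ) (α : Nat.Partition n) : ℕ :=
  Nat.card {P : Finpartition (Finset.univ : Finset (Fin n)) //
    (∀ b ∈ P.parts, ∃ k m : ℕ, 1 ≤ m ∧
      b.image (Fin.val) = (Finset.range m).image (fun t => k + t * r)) ∧
    P.parts.val.map Finset.card = α.parts}

open Finset

section CardImage

variable {α β γ : Type*} [DecidableEq β] [DecidableEq γ] {s : Finset α} {f : α → β} {g : α → γ}

lemma card_image_eq_card_image_prod (h : ∀ a ∈ s, ∀ b ∈ s, f a = f b → g a = g b) :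
    (s.image f).card = (s.image fun a => (f a, g a)).card := by
  have : s.image f = (s.image fun a => (f a, g a)).image Prod.fst := by rw [image_image]; rfl
  rw [this, card_image_of_injOn]
  rintro _ hx _ hy hxy
  obtain ⟨a, ha, rfl⟩ := mem_image.mp (mem_coe.mp hx)
  obtain ⟨b, hb, rfl⟩ := mem_image.mp (mem_coe.mp hy)
  exact Prod.ext hxy (h a ha b hb hxy)

lemma card_image_eq_of_eq_iff_eq (h : ∀ a ∈ s, ∀ b ∈ s, f a = f b ↔ g a = g b) :
    (s.image f).card = (s.image g).card := by
  have hswap : (s.image fun a => (g a, f a)) = (s.image fun a => (f a, g a)).image Prod.swap := by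
    rw [image_image]; rfl
  rw [card_image_eq_card_image_prod fun a ha b hb => (h a ha b hb).mp,
    card_image_eq_card_image_prod fun a ha b hb => (h a ha b hb).mpr, hswap,
    card_image_of_injective _ Prod.swap_injective]

end CardImage

lemma card_subtype_eq_count_map {γ : Type*} [DecidableEq γ] (A : Finset γ) (f : γ → ℕ) (m : ℕ) :
    Fintype.card {x : A // f x = m} = (A.val.map f).count m := by
  rw [Fintype.card_subtype, ← Multiset.attach_map_val A.val, Multiset.map_map, Multiset.count_map,
    univ_eq_attach]
  simp only [Function.comp_apply, eq_comm (a := m)]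
  rfl

theorem card_equiv_preserving_eq_prod_factorial {X Y : Type*} [Fintype X] [DecidableEq X]
    [Fintype Y] [DecidableEq Y]
    {f : X → ℕ} {g : Y → ℕ} (h : ∀ m, Fintype.card {x // f x = m} = Fintype.card {y // g y = m}) :
    Nat.card {e : X ≃ Y // ∀ x, g (e x) = f x} =
      ∏ m ∈ univ.image f, (Fintype.card {x // f x = m}).factorial := by
  let e₀ := Equiv.ofFiberEquiv fun m => Fintype.equivOfCardEq (h m)
  have he₀ (y : Y) : f (e₀.symm y) = g y := by
    have := Equiv.ofFiberEquiv_map (fun m => Fintype.equivOfCardEq (h m)) (e₀.symm y)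
    rw [Equiv.apply_symm_apply] at this
    exact this.symm
  rw [← DomMulAct.stabilizer_card', ← Nat.card_eq_fintype_card]
  refine Nat.card_congr (((Equiv.refl X).equivCongr e₀.symm).subtypeEquiv fun e => ?_)
  simp [funext_iff, he₀]

lemma StrictMonoOn.eqOn_of_image_eq {α β : Type*} [LinearOrder α] [LinearOrder β] {s : Finset α}
    {f g : α → β} (hf : StrictMonoOn f s) (hg : StrictMonoOn g s) (h : s.image f = s.image g) :
    Set.EqOn f g s := by
  have hc : (s.image f).card = s.card := card_image_of_injOn hf.injOn
  have key (φ : α → β) (hφ : StrictMonoOn φ s) (hφs : ∀ x ∈ s, φ x ∈ s.image f) :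
      φ ∘ s.orderEmbOfFin rfl = (s.image f).orderEmbOfFin hc :=
    orderEmbOfFin_unique _ (fun i => hφs _ (orderEmbOfFin_mem s rfl i))
      fun i j hij => hφ (orderEmbOfFin_mem s rfl i) (orderEmbOfFin_mem s rfl j)
        ((s.orderEmbOfFin rfl).strictMono hij)
  have hfg := (key f hf fun x hx => mem_image_of_mem f hx).trans
    (key g hg fun x hx => h ▸ mem_image_of_mem g hx).symm
  intro x hx
  have hx' : s.orderEmbOfFin rfl ((s.orderIsoOfFin rfl).symm ⟨x, hx⟩) = x := by
    rw [← coe_orderIsoOfFin_apply, OrderIso.apply_symm_apply]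
  simpa [hx'] using congrFun hfg ((s.orderIsoOfFin rfl).symm ⟨x, hx⟩)

instance Setoid.decidableRelKer {α β : Type*} [DecidableEq β] (f : α → β) :
    DecidableRel (Setoid.ker f) :=
  fun a b => inferInstanceAs (Decidable (f a = f b))

namespace Finpartition

section Fintype

variable {α β : Type*} [Fintype α] [DecidableEq α] [DecidableEq β]

lemma eq_of_part_eq_part_iff {P Q : Finpartition (univ : Finset α)}
    (h : ∀ a b, P.part a = P.part b ↔ Q.part a = Q.part b) : P = Q := by
  have hpart (a : α) : P.part a = Q.part a := by
    ext x
    rw [mem_part_iff_part_eq_part _ (mem_univ x) (mem_univ a),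
      mem_part_iff_part_eq_part _ (mem_univ x) (mem_univ a), h]
  ext c
  constructor <;> intro hc
  · obtain ⟨a, -, rfl⟩ := P.part_surjOn hc
    simp [hpart]
  · obtain ⟨a, -, rfl⟩ := Q.part_surjOn hc
    simp [← hpart]

lemma card_parts_ofSetoid_ker (f : α → β) :
    (ofSetoid (Setoid.ker f)).parts.card = (univ.image f).card := by
  set P := ofSetoid (Setoid.ker f)
  have hparts : P.parts = univ.image P.part := by
    ext c
    refine ⟨fun hc => ?_, fun hc => ?_⟩
    · obtain ⟨a, -, rfl⟩ := P.part_surjOn hc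
      exact mem_image_of_mem _ (mem_univ a)
    · obtain ⟨a, -, rfl⟩ := mem_image.mp hc
      exact P.part_mem.mpr (mem_univ a)
  rw [hparts]
  refine card_image_eq_of_eq_iff_eq fun a _ b _ => ?_
  rw [← P.mem_part_iff_part_eq_part (mem_univ a) (mem_univ b), mem_part_ofSetoid_iff_rel]
  exact eq_comm

variable [Fintype β]

def mapEquiv (e : α ≃ β) (P : Finpartition (univ : Finset α)) : Finpartition (univ : Finset β) :=
  (P.map (RelIso.mk e.finsetCongr (by simp))).copy (by simp)

@[simp]
lemma parts_mapEquiv (e : α ≃ β) (P : Finpartition (univ : Finset α)) :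
    (P.mapEquiv e).parts = P.parts.image (·.image e) := by
  ext c
  simp [mapEquiv, Finpartition.map, copy, map_eq_image]

lemma map_card_parts_mapEquiv (e : α ≃ β) (P : Finpartition (univ : Finset α)) :
    (P.mapEquiv e).parts.val.map card = P.parts.val.map card := by
  rw [parts_mapEquiv, image_val_of_injOn (image_injective e.injective).injOn, Multiset.map_map]
  exact Multiset.map_congr rfl fun b _ => card_image_of_injective b e.injective

end Fintype

section LinearOrder

variable {α : Type*} [Fintype α] [LinearOrder α] {P Q : Finpartition (univ : Finset α)}

def partOrderIso (e : P.parts ≃ Q.parts) (he : ∀ b, (e b).1.card = b.1.card) (b : P.parts) :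
    b.1 ≃o (e b).1 :=
  (b.1.orderIsoOfFin rfl).symm.trans ((e b).1.orderIsoOfFin (he b))

def permOfPartsEquiv (e : P.parts ≃ Q.parts) (he : ∀ b, (e b).1.card = b.1.card) :
    Equiv.Perm α :=
  (Equiv.subtypeUnivEquiv mem_univ).symm.trans <| P.equivSigmaParts.trans <|
    (Equiv.sigmaCongr e fun b => (partOrderIso e he b).toEquiv).trans <|
    Q.equivSigmaParts.symm.trans (Equiv.subtypeUnivEquiv mem_univ)

section PermOfPartsEquiv

variable {e : P.parts ≃ Q.parts} {he : ∀ b, (e b).1.card = b.1.card}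

lemma permOfPartsEquiv_apply (b : P.parts) (x : b.1) :
    permOfPartsEquiv e he x = partOrderIso e he b x := by
  have hx : P.equivSigmaParts ⟨x, mem_univ _⟩ = ⟨b, x⟩ :=
    Sigma.subtype_ext (Subtype.ext (P.part_eq_of_mem b.2 x.2)) rfl
  simp only [permOfPartsEquiv, Equiv.trans_apply, Equiv.subtypeUnivEquiv_symm_apply, hx]
  rfl

lemma image_permOfPartsEquiv (b : P.parts) : b.1.image (permOfPartsEquiv e he) = (e b).1 := by
  ext y
  constructor
  · intro hy
    obtain ⟨x, hx, rfl⟩ := mem_image.mp hy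
    rw [permOfPartsEquiv_apply b ⟨x, hx⟩]
    exact Subtype.property _
  · intro hy
    obtain ⟨x, hx⟩ := (partOrderIso e he b).surjective ⟨y, hy⟩
    exact mem_image.mpr ⟨x, x.2, by rw [permOfPartsEquiv_apply b x, hx]⟩

lemma strictMonoOn_permOfPartsEquiv (b : P.parts) :
    StrictMonoOn (permOfPartsEquiv e he) b.1 := by
  intro x hx y hy hxy
  rw [permOfPartsEquiv_apply b ⟨x, hx⟩, permOfPartsEquiv_apply b ⟨y, hy⟩]
  exact (partOrderIso e he b).strictMono (show (⟨x, hx⟩ : b.1) < ⟨y, hy⟩ from hxy)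

lemma mapEquiv_permOfPartsEquiv : P.mapEquiv (permOfPartsEquiv e he) = Q := by
  ext c
  simp only [parts_mapEquiv, mem_image]
  constructor
  · rintro ⟨b, hb, rfl⟩
    rw [image_permOfPartsEquiv ⟨b, hb⟩]
    exact Subtype.property _
  · intro hc
    exact ⟨_, (e.symm ⟨c, hc⟩).2, by rw [image_permOfPartsEquiv, Equiv.apply_symm_apply]⟩

end PermOfPartsEquiv

noncomputable def partsEquivOfMapEquiv {π : Equiv.Perm α} (h : P.mapEquiv π = Q) :
    P.parts ≃ Q.parts :=
  Equiv.ofBijective (fun b => ⟨b.1.image π, h ▸ by simpa using ⟨b.1, b.2, rfl⟩⟩) <| by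
    refine ⟨fun b b' hbb' => Subtype.ext (image_injective π.injective (congrArg Subtype.val hbb')),
      fun c => ?_⟩
    have hc : c.1 ∈ (P.mapEquiv π).parts := by rw [h]; exact c.2
    rw [parts_mapEquiv] at hc
    obtain ⟨b, hb, hbc⟩ := mem_image.mp hc
    exact ⟨⟨b, hb⟩, Subtype.ext hbc⟩

noncomputable def strictMonoPermEquiv :
    {π : Equiv.Perm α // P.mapEquiv π = Q ∧ ∀ b ∈ P.parts, StrictMonoOn π b} ≃
      {e : P.parts ≃ Q.parts // ∀ b, (e b).1.card = b.1.card} where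
  toFun π := ⟨partsEquivOfMapEquiv π.2.1, fun _ => card_image_of_injective _ π.1.injective⟩
  invFun e := ⟨permOfPartsEquiv e.1 e.2, mapEquiv_permOfPartsEquiv,
    fun b hb => strictMonoOn_permOfPartsEquiv ⟨b, hb⟩⟩
  left_inv π := by
    refine Subtype.ext <| Equiv.ext fun a => ?_
    have hb : P.part a ∈ P.parts := P.part_mem.mpr (mem_univ a)
    exact (strictMonoOn_permOfPartsEquiv ⟨_, hb⟩).eqOn_of_image_eq (π.2.2 _ hb)
      (image_permOfPartsEquiv ⟨_, hb⟩) (P.mem_part (mem_univ a))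
  right_inv e := Subtype.ext <| Equiv.ext fun b => Subtype.ext (image_permOfPartsEquiv b)

theorem card_strictMonoOn_perm_mapEquiv_eq (h : P.parts.val.map card = Q.parts.val.map card) :
    Nat.card {π : Equiv.Perm α // P.mapEquiv π = Q ∧ ∀ b ∈ P.parts, StrictMonoOn π b} =
      ∏ m ∈ (P.parts.val.map card).toFinset, ((P.parts.val.map card).count m).factorial := by
  rw [Nat.card_congr strictMonoPermEquiv,
    card_equiv_preserving_eq_prod_factorial (f := fun b : P.parts => b.1.card)
      (g := fun c : Q.parts => c.1.card) fun m => by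
        rw [card_subtype_eq_count_map, card_subtype_eq_count_map, h]]
  have himage : univ.image (fun b : P.parts => b.1.card) = (P.parts.val.map card).toFinset := by
    ext
    simp
  simp_rw [himage, card_subtype_eq_count_map]

end LinearOrder

def sizePartition {n : ℕ} (P : Finpartition (univ : Finset (Fin n))) : Nat.Partition n where
  parts := P.parts.val.map card
  parts_pos hm := by
    obtain ⟨b, hb, rfl⟩ := Multiset.mem_map.mp hm
    exact card_pos.mpr (P.nonempty_of_mem_parts hb)
  parts_sum := by simpa using P.sum_card_parts

end Finpartition

lemma Nat.Partition.prod_toFinset_count_factorial {n : ℕ} (α : Nat.Partition n) :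
    ∏ m ∈ α.parts.toFinset, (α.parts.count m).factorial =
      ∏ m ∈ Icc 1 n, (α.parts.count m).factorial := by
  refine prod_subset (fun m hm => ?_) fun m _ hm => ?_
  · rw [Multiset.mem_toFinset] at hm
    exact mem_Icc.mpr ⟨α.parts_pos hm, α.le_of_mem_parts hm⟩
  · rw [Multiset.count_eq_zero.mpr (Multiset.mem_toFinset.not.mp hm), Nat.factorial_zero]

def IsAP (d : ℕ) (A : Finset ℕ) : Prop :=
  ∃ k m : ℕ, 1 ≤ m ∧ A = (range m).image fun t => k + t * d

namespace IsAP

variable {d : ℕ} {A : Finset ℕ} {a a' : ℕ}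

lemma add_mem_of_lt (hA : IsAP d A) (ha : a ∈ A) (ha' : a' ∈ A) (h : a < a') : a + d ∈ A := by
  obtain ⟨k, m, -, rfl⟩ := hA
  obtain ⟨t, -, rfl⟩ := mem_image.mp ha
  obtain ⟨t', ht', rfl⟩ := mem_image.mp ha'
  have htt' : t < t' := Nat.lt_of_mul_lt_mul_right (a := d) (by omega)
  exact mem_image.mpr ⟨t + 1, mem_range.mpr (by rw [mem_range] at ht'; omega), by ring⟩

lemma add_le_of_lt (hA : IsAP d A) (ha : a ∈ A) (ha' : a' ∈ A) (h : a < a') : a + d ≤ a' := by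
  obtain ⟨k, m, -, rfl⟩ := hA
  obtain ⟨t, -, rfl⟩ := mem_image.mp ha
  obtain ⟨t', -, rfl⟩ := mem_image.mp ha'
  have htt' : t + 1 ≤ t' := Nat.lt_of_mul_lt_mul_right (a := d) (by omega)
  nlinarith

end IsAP

section Progressions

variable {n d k m : ℕ} {b : Finset (Fin n)}

lemma mem_iff_of_image_val_eq (hb : b.image Fin.val = (range m).image fun t => k + t * d)
    (x : Fin n) : x ∈ b ↔ ∃ t < m, k + t * d = x := by
  rw [← Fin.val_injective.mem_finset_image, hb]
  simp

lemma exists_mem_of_image_val_eq (hb : b.image Fin.val = (range m).image fun t => k + t * d)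
    {t : ℕ} (ht : t < m) : ∃ x ∈ b, (x : ℕ) = k + t * d := by
  have : k + t * d ∈ b.image Fin.val := hb ▸ mem_image.mpr ⟨t, mem_range.mpr ht, rfl⟩
  simpa using this

variable {s : ℕ} {f : Fin n → Fin n}

lemma isAP_image_and_strictMonoOn_of_forall_add (hs : 0 < s) (hm : 1 ≤ m)
    (hb : b.image Fin.val = (range m).image fun t => k + t * d)
    (hf : ∀ a ∈ b, ∀ a' ∈ b, (a' : ℕ) = a + d → (f a' : ℕ) = f a + s) :
    IsAP s ((b.image f).image Fin.val) ∧ StrictMonoOn f b := by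
  obtain ⟨a₀, ha₀, ha₀k⟩ := exists_mem_of_image_val_eq hb hm
  have hval (t : ℕ) (ht : t < m) (x : Fin n) (hx : x ∈ b) (hxt : k + t * d = x) :
      (f x : ℕ) = f a₀ + t * s := by
    induction t generalizing x with
    | zero => rw [Fin.ext (hxt.symm.trans (by simpa using ha₀k.symm))]; simp
    | succ t ih =>
      obtain ⟨y, hy, hyt⟩ := exists_mem_of_image_val_eq hb (t := t) (by omega)
      rw [hf y hy x hx (by rw [← hxt, hyt]; ring), ih (by omega) y hy hyt.symm]
      ring
  refine ⟨⟨f a₀, m, hm, ?_⟩, fun x hx y hy hxy => ?_⟩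
  · ext v
    simp only [mem_image, mem_range]
    constructor
    · rintro ⟨_, ⟨x, hx, rfl⟩, rfl⟩
      obtain ⟨t, ht, hxt⟩ := (mem_iff_of_image_val_eq hb x).mp hx
      exact ⟨t, ht, (hval t ht x hx hxt).symm⟩
    · rintro ⟨t, ht, rfl⟩
      obtain ⟨x, hx, hxt⟩ := exists_mem_of_image_val_eq hb ht
      exact ⟨f x, ⟨x, hx, rfl⟩, hval t ht x hx hxt.symm⟩
  · obtain ⟨t, ht, hxt⟩ := (mem_iff_of_image_val_eq hb x).mp hx
    obtain ⟨u, hu, hyu⟩ := (mem_iff_of_image_val_eq hb y).mp hy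
    have htu : t < u := Nat.lt_of_mul_lt_mul_right (a := d) (by rw [Fin.lt_def] at hxy; omega)
    rw [Fin.lt_def, hval t ht x hx hxt, hval u hu y hy hyu]
    nlinarith

lemma forall_add_of_isAP_image_of_strictMonoOn (hd : 0 < d) (hs : 0 < s)
    (hb : IsAP d (b.image Fin.val)) (hC : IsAP s ((b.image f).image Fin.val))
    (hmono : StrictMonoOn f b) :
    ∀ a ∈ b, ∀ a' ∈ b, (a' : ℕ) = a + d → (f a' : ℕ) = f a + s := by
  intro a ha a' ha' haa'
  have hmemC (x : Fin n) (hx : x ∈ b) : (f x : ℕ) ∈ (b.image f).image Fin.val :=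
    mem_image_of_mem _ (mem_image_of_mem f hx)
  have hlt : f a < f a' := hmono ha ha' (by rw [Fin.lt_def]; omega)
  -- `f a + s` is the successor of `f a` in the image, so its preimage `y` comes after `a`, hence
  -- not before its successor `a'`.
  obtain ⟨y, hy, hyv⟩ : ∃ y ∈ b, (f y : ℕ) = f a + s := by
    simpa using hC.add_mem_of_lt (hmemC a ha) (hmemC a' ha') hlt
  have hay : a < y := (hmono.lt_iff_lt ha hy).mp (by rw [Fin.lt_def]; omega)
  have ha'y : a' ≤ y := by
    rw [Fin.le_def, haa']
    exact hb.add_le_of_lt (mem_image_of_mem _ ha) (mem_image_of_mem _ hy) hay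
  have hfa'y : (f a' : ℕ) ≤ f y := (hmono.le_iff_le ha' hy).mpr ha'y
  have := hC.add_le_of_lt (hmemC a ha) (hmemC a' ha') hlt
  omega

lemma isAP_image_and_strictMonoOn_iff (hd : 0 < d) (hs : 0 < s) (hb : IsAP d (b.image Fin.val)) :
    IsAP s ((b.image f).image Fin.val) ∧ StrictMonoOn f b ↔
      ∀ a ∈ b, ∀ a' ∈ b, (a' : ℕ) = a + d → (f a' : ℕ) = f a + s := by
  refine ⟨fun ⟨hC, hmono⟩ => forall_add_of_isAP_image_of_strictMonoOn hd hs hb hC hmono,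
    fun hf => ?_⟩
  obtain ⟨k, m, hm, hkm⟩ := hb
  exact isAP_image_and_strictMonoOn_of_forall_add hs hm hkm hf

end Progressions

def chainStart (r : ℕ) (S : Finset ℕ) (i : ℕ) : ℕ :=
  if 0 < r ∧ r ≤ i ∧ i - r ∈ S then chainStart r S (i - r) else i
termination_by i
decreasing_by omega

section ChainStart

variable {r : ℕ} {S : Finset ℕ} {i : ℕ}

lemma chainStart_of_not (h : ¬(0 < r ∧ r ≤ i ∧ i - r ∈ S)) : chainStart r S i = i := by
  rw [chainStart, if_neg h]

lemma chainStart_of (h : 0 < r ∧ r ≤ i ∧ i - r ∈ S) :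
    chainStart r S i = chainStart r S (i - r) := by
  rw [chainStart, if_pos h]

lemma chainStart_add_of_mem (hr : 0 < r) (hi : i ∈ S) :
    chainStart r S (i + r) = chainStart r S i := by
  rw [chainStart_of ⟨hr, by omega, by simpa using hi⟩, Nat.add_sub_cancel]

lemma chainStart_add_of_not_mem (hi : i ∉ S) : chainStart r S (i + r) = i + r :=
  chainStart_of_not fun h => hi (by simpa using h.2.2)

lemma chainStart_spec (r : ℕ) (S : Finset ℕ) (i : ℕ) :
    ∃ t, chainStart r S i + t * r = i ∧ ∀ u < t, chainStart r S i + u * r ∈ S := by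
  induction i using Nat.strong_induction_on with
  | _ i ih =>
    by_cases h : 0 < r ∧ r ≤ i ∧ i - r ∈ S
    · obtain ⟨t, ht, hS⟩ := ih (i - r) (by omega)
      rw [chainStart_of h]
      refine ⟨t + 1, by rw [add_mul]; omega, fun u hu => ?_⟩
      rcases Nat.lt_succ_iff_lt_or_eq.mp hu with hu | rfl
      · exact hS u hu
      · rw [ht]
        exact h.2.2
    · exact ⟨0, by simp [chainStart_of_not h], fun u hu => absurd hu (Nat.not_lt_zero u)⟩

lemma chainStart_le (r : ℕ) (S : Finset ℕ) (i : ℕ) : chainStart r S i ≤ i := by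
  obtain ⟨t, ht, -⟩ := chainStart_spec r S i
  omega

lemma chainStart_chainStart (r : ℕ) (S : Finset ℕ) (i : ℕ) :
    chainStart r S (chainStart r S i) = chainStart r S i := by
  induction i using Nat.strong_induction_on with
  | _ i ih =>
    by_cases h : 0 < r ∧ r ≤ i ∧ i - r ∈ S
    · rw [chainStart_of h]
      exact ih (i - r) (by omega)
    · rw [chainStart_of_not h, chainStart_of_not h]

lemma isAP_filter_chainStart_eq (hr : 0 < r) {n k : ℕ} (hk : chainStart r S k = k) (hkn : k < n) :
    IsAP r ((range n).filter fun j => chainStart r S j = k) := by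
  let T (t : ℕ) : Prop := k + t * r < n ∧ chainStart r S (k + t * r) = k
  have hT_succ (t : ℕ) (ht : T (t + 1)) : T t := by
    have hlink : k + t * r ∈ S := by
      by_contra hnot
      have := ht.2
      rw [add_mul, one_mul, ← add_assoc, chainStart_add_of_not_mem hnot] at this
      omega
    refine ⟨by have := ht.1; rw [add_mul] at this; omega, ?_⟩
    rw [← chainStart_add_of_mem hr hlink, add_assoc, ← Nat.succ_mul]
    exact ht.2
  have hex : ∃ t, ¬T t := ⟨n, fun h => by nlinarith [h.1]⟩
  have hT (t : ℕ) : T t ↔ t < Nat.find hex := by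
    refine ⟨fun ht => ?_, fun ht => not_not.mp (Nat.find_min hex ht)⟩
    by_contra hle
    exact Nat.find_spec hex <| Nat.decreasingInduction (motive := fun t _ => T t)
      (fun t _ ht => hT_succ t ht) ht (not_lt.mp hle)
  refine ⟨k, Nat.find hex, (hT 0).mp (by simpa [T] using ⟨hkn, hk⟩), ?_⟩
  ext j
  simp only [mem_filter, mem_range, mem_image]
  constructor
  · rintro ⟨hjn, hjk⟩
    obtain ⟨t, ht, -⟩ := chainStart_spec r S j
    rw [hjk] at ht
    exact ⟨t, (hT t).mp ⟨ht ▸ hjn, ht ▸ hjk⟩, ht⟩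
  · rintro ⟨t, ht, rfl⟩
    exact (hT t).mpr ht

end ChainStart

section Partitions

variable {n r s : ℕ}

def IsAPPartition (d : ℕ) (P : Finpartition (univ : Finset (Fin n))) : Prop :=
  ∀ b ∈ P.parts, IsAP d (b.image Fin.val)

def links (r : ℕ) (P : Finpartition (univ : Finset (Fin n))) : Finset ℕ :=
  (range (n - r)).filter fun i => ∀ a b : Fin n, (a : ℕ) = i → (b : ℕ) = i + r → P.part a = P.part b

section Links

variable {P Q : Finpartition (univ : Finset (Fin n))}

lemma mem_links_iff {a b : Fin n} (hab : (b : ℕ) = a + r) :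
    (a : ℕ) ∈ links r P ↔ P.part a = P.part b := by
  simp only [links, mem_filter, mem_range]
  refine ⟨fun h => h.2 a b rfl hab, fun h => ⟨by omega, fun a' b' ha' hb' => ?_⟩⟩
  rw [Fin.ext ha', Fin.ext (hb'.trans hab.symm), h]

lemma links_subset (r : ℕ) (P : Finpartition (univ : Finset (Fin n))) :
    links r P ⊆ range (n - r) :=
  filter_subset _ _

lemma part_eq_part_of_forall_mem_links {a : Fin n} {t : ℕ}
    (hlinks : ∀ u < t, (a : ℕ) + u * r ∈ links r P) {a' : Fin n} (ha' : (a' : ℕ) = a + t * r) :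
    P.part a = P.part a' := by
  induction t generalizing a' with
  | zero => rw [Fin.ext (a := a') (by simpa using ha')]
  | succ t ih =>
    let a'' : Fin n := ⟨a + t * r, by have := a'.2; rw [add_mul] at ha'; omega⟩
    rw [ih (a' := a'') (fun u hu => hlinks u (by omega)) rfl]
    exact (mem_links_iff (by rw [ha', add_mul, one_mul, ← add_assoc])).mp (hlinks t (by omega))

lemma IsAPPartition.part_eq_part_iff (hr : 0 < r) (hP : IsAPPartition r P) {a a' : Fin n}
    (h : a ≤ a') : P.part a = P.part a' ↔
      ∃ t, (a' : ℕ) = a + t * r ∧ ∀ u < t, (a : ℕ) + u * r ∈ links r P := by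
  refine ⟨fun hpart => ?_, fun ⟨t, ht, hlinks⟩ => part_eq_part_of_forall_mem_links hlinks ht⟩
  have hb := P.part_mem.mpr (mem_univ a)
  obtain ⟨k, m, -, hkm⟩ := hP _ hb
  obtain ⟨t₁, -, ht₁⟩ := (mem_iff_of_image_val_eq hkm a).mp (P.mem_part (mem_univ a))
  obtain ⟨t₂, ht₂, ht₂'⟩ := (mem_iff_of_image_val_eq hkm a').mp (hpart ▸ P.mem_part (mem_univ a'))
  have h₁₂ : t₁ ≤ t₂ :=
    Nat.le_of_mul_le_mul_right (show t₁ * r ≤ t₂ * r by rw [Fin.le_def] at h; omega) hr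
  refine ⟨t₂ - t₁, by rw [← ht₁, ← ht₂', add_assoc, ← add_mul, Nat.add_sub_cancel' h₁₂],
    fun u hu => ?_⟩
  obtain ⟨x, hx, hxv⟩ := exists_mem_of_image_val_eq hkm (t := t₁ + u) (by omega)
  obtain ⟨y, hy, hyv⟩ := exists_mem_of_image_val_eq hkm (t := t₁ + u + 1) (by omega)
  have hxa : (x : ℕ) = a + u * r := by rw [hxv, ← ht₁, add_mul, add_assoc]
  rw [← hxa, mem_links_iff (b := y) (by rw [hyv, hxv, add_mul, one_mul, add_assoc]),
    P.part_eq_of_mem hb hx, P.part_eq_of_mem hb hy]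

lemma IsAPPartition.eq_of_links_eq (hr : 0 < r) (hP : IsAPPartition r P)
    (hQ : IsAPPartition r Q) (h : links r P = links r Q) : P = Q := by
  refine Finpartition.eq_of_part_eq_part_iff fun a a' => ?_
  rcases le_total a a' with haa' | haa'
  · rw [hP.part_eq_part_iff hr haa', hQ.part_eq_part_iff hr haa', h]
  · rw [eq_comm, hP.part_eq_part_iff hr haa', eq_comm (a := Q.part a),
      hQ.part_eq_part_iff hr haa', h]

end Links

section ChainPartition

variable {S : Finset ℕ}

def chainPartition (r n : ℕ) (S : Finset ℕ) : Finpartition (univ : Finset (Fin n)) :=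
  Finpartition.ofSetoid (Setoid.ker fun a : Fin n => chainStart r S a)

lemma chainPartition_part_eq_part_iff {a b : Fin n} :
    (chainPartition r n S).part a = (chainPartition r n S).part b ↔
      chainStart r S a = chainStart r S b := by
  rw [← Finpartition.mem_part_iff_part_eq_part _ (mem_univ _) (mem_univ _), chainPartition,
    Finpartition.mem_part_ofSetoid_iff_rel]
  exact eq_comm

lemma isAPPartition_chainPartition (hr : 0 < r) : IsAPPartition r (chainPartition r n S) := by
  intro b hb
  obtain ⟨a, -, rfl⟩ := (chainPartition r n S).part_surjOn hb
  have himage : ((chainPartition r n S).part a).image Fin.val =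
      (range n).filter fun j => chainStart r S j = chainStart r S a := by
    ext j
    simp only [mem_image, mem_filter, mem_range]
    constructor
    · rintro ⟨x, hx, rfl⟩
      rw [Finpartition.mem_part_iff_part_eq_part _ (mem_univ _) (mem_univ _),
        chainPartition_part_eq_part_iff] at hx
      exact ⟨x.2, hx⟩
    · rintro ⟨hj, hja⟩
      refine ⟨⟨j, hj⟩, ?_, rfl⟩
      rw [Finpartition.mem_part_iff_part_eq_part _ (mem_univ _) (mem_univ _),
        chainPartition_part_eq_part_iff]
      exact hja
  rw [himage]
  exact isAP_filter_chainStart_eq hr (chainStart_chainStart r S a)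
    ((chainStart_le r S a).trans_lt a.2)

lemma links_chainPartition (hr : 0 < r) (hS : S ⊆ range (n - r)) :
    links r (chainPartition r n S) = S := by
  ext i
  by_cases hi : i < n - r
  · rw [mem_links_iff (a := ⟨i, by omega⟩) (b := ⟨i + r, by omega⟩) rfl,
      chainPartition_part_eq_part_iff]
    by_cases hiS : i ∈ S
    · simp [chainStart_add_of_mem hr hiS, hiS]
    · simp only [chainStart_add_of_not_mem hiS, hiS, iff_false]
      have := chainStart_le r S i
      omega
  · exact iff_of_false (fun h => hi (mem_range.mp (links_subset r _ h)))
      fun h => hi (mem_range.mp (hS h))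

lemma card_parts_chainPartition_add_card (hr : 0 < r) (hS : S ⊆ range (n - r)) :
    (chainPartition r n S).parts.card + S.card = n := by
  have hstarts : univ.image (fun a : Fin n => chainStart r S a) =
      (range n).filter fun k => chainStart r S k = k := by
    ext k
    simp only [mem_image, mem_univ, true_and, mem_filter, mem_range]
    constructor
    · rintro ⟨a, rfl⟩
      exact ⟨(chainStart_le r S a).trans_lt a.2, chainStart_chainStart r S a⟩
    · rintro ⟨hk, hkk⟩
      exact ⟨⟨k, hk⟩, hkk⟩
  have hnonstarts : (range n).filter (fun k => ¬chainStart r S k = k) = S.image (· + r) := by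
    ext j
    simp only [mem_filter, mem_range, mem_image]
    constructor
    · rintro ⟨hj, hjj⟩
      by_cases h : 0 < r ∧ r ≤ j ∧ j - r ∈ S
      · exact ⟨j - r, h.2.2, by omega⟩
      · exact absurd (chainStart_of_not h) hjj
    · rintro ⟨i, hi, rfl⟩
      have := mem_range.mp (hS hi)
      have := chainStart_le r S i
      refine ⟨by omega, ?_⟩
      rw [chainStart_add_of_mem hr hi]
      omega
  rw [chainPartition, Finpartition.card_parts_ofSetoid_ker, hstarts,
    ← card_image_of_injective S (add_left_injective r), ← hnonstarts,
    card_filter_add_card_filter_not, card_range]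

end ChainPartition

section IsAPPartition

variable {P : Finpartition (univ : Finset (Fin n))}

lemma IsAPPartition.chainPartition_links (hr : 0 < r) (hP : IsAPPartition r P) :
    chainPartition r n (links r P) = P :=
  (isAPPartition_chainPartition hr).eq_of_links_eq hr hP
    (links_chainPartition hr (links_subset r P))

lemma IsAPPartition.card_parts_add_card_links (hr : 0 < r) (hP : IsAPPartition r P) :
    P.parts.card + (links r P).card = n := by
  have := card_parts_chainPartition_add_card hr (links_subset r P)
  rwa [hP.chainPartition_links hr] at this

def isAPPartitionEquivPowerset (hr : 0 < r) :
    {P : Finpartition (univ : Finset (Fin n)) // IsAPPartition r P} ≃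
      {S : Finset ℕ // S ∈ (range (n - r)).powerset} where
  toFun P := ⟨links r P.1, mem_powerset.mpr (links_subset r P.1)⟩
  invFun S := ⟨chainPartition r n S.1, isAPPartition_chainPartition hr⟩
  left_inv P := Subtype.ext (P.2.chainPartition_links hr)
  right_inv S := Subtype.ext (links_chainPartition hr (mem_powerset.mp S.2))

def MapsLinks (r s : ℕ) (P : Finpartition (univ : Finset (Fin n))) (π : Equiv.Perm (Fin n)) :
    Prop :=
  ∀ a b : Fin n, (b : ℕ) = a + r → P.part a = P.part b → (π b : ℕ) = π a + s

lemma mapsLinks_iff (hr : 0 < r) (hs : 0 < s) (hP : IsAPPartition r P) (π : Equiv.Perm (Fin n)) :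
    MapsLinks r s P π ↔ IsAPPartition s (P.mapEquiv π) ∧ ∀ b ∈ P.parts, StrictMonoOn π b := by
  have hblocks : MapsLinks r s P π ↔
      ∀ b ∈ P.parts, ∀ a ∈ b, ∀ a' ∈ b, (a' : ℕ) = a + r → (π a' : ℕ) = π a + s := by
    refine ⟨fun h b hb a ha a' ha' haa' => h a a' haa' ?_, fun h a a' haa' hpart => ?_⟩
    · rw [P.part_eq_of_mem hb ha, P.part_eq_of_mem hb ha']
    · refine h _ (P.part_mem.mpr (mem_univ a)) a (P.mem_part (mem_univ a)) a' ?_ haa'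
      rw [Finpartition.mem_part_iff_part_eq_part _ (mem_univ _) (mem_univ _), hpart]
  rw [hblocks, IsAPPartition, Finpartition.parts_mapEquiv, forall_mem_image, ← forall₂_and]
  exact forall₂_congr fun b hb => (isAP_image_and_strictMonoOn_iff hr hs (hP b hb)).symm

noncomputable def mapsLinksEquiv (hr : 0 < r) (hs : 0 < s) (hP : IsAPPartition r P) :
    {π // MapsLinks r s P π} ≃
      Σ Q : {Q // IsAPPartition s Q ∧ Q.parts.val.map card = P.parts.val.map card},
        {π : Equiv.Perm (Fin n) // P.mapEquiv π = Q.1 ∧ ∀ b ∈ P.parts, StrictMonoOn π b} where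
  toFun π :=
    have h := (mapsLinks_iff hr hs hP π.1).mp π.2
    ⟨⟨P.mapEquiv π.1, h.1, Finpartition.map_card_parts_mapEquiv π.1 P⟩, π.1, rfl, h.2⟩
  invFun x := ⟨x.2.1, (mapsLinks_iff hr hs hP _).mpr ⟨by rw [x.2.2.1]; exact x.1.2.1, x.2.2.2⟩⟩
  left_inv π := rfl
  right_inv x := Sigma.subtype_ext (Subtype.ext x.2.2.1) rfl

theorem card_mapsLinks (hr : 0 < r) (hs : 0 < s) (hP : IsAPPartition r P) :
    Nat.card {π // MapsLinks r s P π} = tilingCount n s P.sizePartition *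
      ∏ m ∈ P.sizePartition.parts.toFinset, (P.sizePartition.parts.count m).factorial := by
  classical
  rw [Nat.card_congr (mapsLinksEquiv hr hs hP), Nat.card_sigma,
    sum_congr rfl fun Q _ => Finpartition.card_strictMonoOn_perm_mapEquiv_eq Q.2.2.symm,
    sum_const, card_univ, smul_eq_mul, ← Nat.card_eq_fintype_card]
  rfl

end IsAPPartition

def shiftPerms (r s n i : ℕ) : Finset (Equiv.Perm (Fin n)) :=
  univ.filter fun π => ∀ a b : Fin n, (a : ℕ) = i → (b : ℕ) = i + r → (π b : ℕ) = π a + s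

lemma noShift_eq_inf_compl (r s n : ℕ) :
    noShift r s n = (range (n - r)).inf fun i => (shiftPerms r s n i)ᶜ := by
  ext π
  simp only [noShift, shiftPerms, mem_filter, mem_univ, true_and, mem_inf, mem_compl, mem_range]
  constructor
  · intro h i hi hshift
    have := hshift ⟨i, by omega⟩ ⟨i + r, by omega⟩ rfl rfl
    exact h ⟨i, by omega⟩ ⟨i + r, by omega⟩ rfl (by push_cast [this]; ring)
  · intro h a b hab hdiff
    refine h a (by omega) fun a' b' ha' hb' => ?_
    rw [Fin.ext ha', Fin.ext (hb'.trans hab.symm)]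
    omega

lemma card_inf_shiftPerms_links (P : Finpartition (univ : Finset (Fin n))) :
    ((links r P).inf (shiftPerms r s n)).card = Nat.card {π // MapsLinks r s P π} := by
  rw [← Nat.card_eq_finsetCard]
  refine Nat.card_congr (Equiv.subtypeEquivRight fun π => ?_)
  simp only [mem_inf, shiftPerms, mem_filter, mem_univ, true_and]
  constructor
  · intro h a b hab hpart
    exact h a ((mem_links_iff hab).mpr hpart) a b rfl hab
  · rintro h _ hi a b rfl hb
    exact h a b hb ((mem_links_iff hb).mp hi)

lemma IsAPPartition.neg_one_pow_mul_card_inf_shiftPerms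
    {P : Finpartition (univ : Finset (Fin n))} (hr : 0 < r) (hs : 0 < s) (hP : IsAPPartition r P) :
    (-1 : ℤ) ^ (links r P).card * ((links r P).inf (shiftPerms r s n)).card =
      tilingCount n s P.sizePartition * (-1) ^ (n - P.sizePartition.parts.card) *
        ∏ m ∈ Icc 1 n, ((P.sizePartition.parts.count m).factorial : ℤ) := by
  have hlinks : (links r P).card = n - P.sizePartition.parts.card := by
    have := hP.card_parts_add_card_links hr
    simp only [Finpartition.sizePartition, Multiset.card_map, card_val]
    omega
  rw [card_inf_shiftPerms_links, card_mapsLinks hr hs hP, hlinks,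
    P.sizePartition.prod_toFinset_count_factorial]
  push_cast
  ring

section Sums

variable {M : Type*} [AddCommMonoid M] [DecidablePred (IsAPPartition (n := n) r)]

lemma sum_powerset_eq_sum_isAPPartition (hr : 0 < r) (g : Finset ℕ → M) :
    ∑ S ∈ (range (n - r)).powerset, g S =
      ∑ P : {P // IsAPPartition (n := n) r P}, g (links r P.1) := by
  rw [← sum_coe_sort]
  exact ((isAPPartitionEquivPowerset hr).sum_comp fun S => g S.1).symm

lemma sum_isAPPartition_sizePartition (F : Nat.Partition n → M) :
    ∑ P : {P // IsAPPartition (n := n) r P}, F P.1.sizePartition =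
      ∑ α, tilingCount n r α • F α := by
  rw [← Fintype.sum_fiberwise fun P : {P // IsAPPartition (n := n) r P} => P.1.sizePartition]
  refine Fintype.sum_congr _ _ fun α => ?_
  have hcard : Fintype.card {P : {P // IsAPPartition (n := n) r P} // P.1.sizePartition = α} =
      tilingCount n r α := by
    rw [← Nat.card_eq_fintype_card]
    exact Nat.card_congr <| (Equiv.subtypeSubtypeEquivSubtypeInter _ _).trans
      (Equiv.subtypeEquivRight fun P => and_congr_right' Nat.Partition.ext_iff)
  rw [Fintype.sum_congr _ _ fun P => congrArg F P.2, sum_const, card_univ, hcard]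

end Sums

end Partitions

theorem noShift_card_eq_general (r s n : ℕ) (hr : 0 < r) (hs : 0 < s) :
    ((noShift r s n).card : ℤ) =
      ∑ α : Nat.Partition n,
        (tilingCount n s α : ℤ) * (tilingCount n r α : ℤ)
          * (-1) ^ (n - α.parts.card)
          * ∏ m ∈ Finset.Icc 1 n, ((Multiset.count m α.parts).factorial : ℤ) := by
  classical
  rw [noShift_eq_inf_compl, inclusion_exclusion_card_inf_compl,
    sum_powerset_eq_sum_isAPPartition hr]
  simp_rw [fun P : {P // IsAPPartition r P} => P.2.neg_one_pow_mul_card_inf_shiftPerms hr hs]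
  rw [sum_isAPPartition_sizePartition fun α => (tilingCount n s α : ℤ) *
    (-1) ^ (n - α.parts.card) * ∏ m ∈ Icc 1 n, ((α.parts.count m).factorial : ℤ)]
  refine Fintype.sum_congr _ _ fun α => ?_
  rw [nsmul_eq_mul]
  ring

/-- For all positive `r`, `s`, `n`:
`a_{r,s}(n) = Σ_α C^{(n,s)}_α · C^{(n,r)}_α · (-1)^{n-(a_1+⋯+a_n)} · a_1!·a_2!⋯a_n!`,
where `α` ranges over the partitions of `n` and `a_m` is the multiplicity of the
part `m` in `α` (so that `a_1 + ⋯ + a_n` is the number of parts of `α`). -/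
theorem noShift_card_eq (r s n : ℕ) (hr : 0 < r) (hs : 0 < s) (hn : 0 < n) :
    ((noShift r s n).card : ℤ) =
      ∑ α : Nat.Partition n,
        (tilingCount n s α : ℤ) * (tilingCount n r α : ℤ)
          * (-1) ^ (n - α.parts.card)
          * ∏ m ∈ Finset.Icc 1 n, ((Multiset.count m α.parts).factorial : ℤ) :=
  noShift_card_eq_general r s n hr hs
end
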